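/- arXiv:2208.13859 — 5 statements merged into one kernel-verified Lean document; each statement's English description precedes it below -/
import Mathlib

section
/- Let X be an injective metric space and let Y ⊆ X be an M-Morse subset for a Morse gauge M. Then for every x ∈ X, every y ∈ π_Y(x), and every z ∈ Y, one has d(x,z) ≥ d(x,y) + d(y,z) − 2·M(1,0) − 2. -/
universe u

/-- A metric space is *injective* (hyperconvex) if every family of closed balls that
pairwise intersect (i.e. `dist xᵢ xⱼ ≤ rᵢ + rⱼ` for `i ≠ j`) has a common point.
Families are encoded as sets of (center, radius) pairs. -/
def IsInjectiveSpace (X : Type u) [MetricSpace X] : Prop :=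
  ∀ s : Set (X × ℝ), (∀ p ∈ s, 0 ≤ p.2) →
    (∀ p ∈ s, ∀ q ∈ s, p ≠ q → dist p.1 q.1 ≤ p.2 + q.2) →
    ∃ z : X, ∀ p ∈ s, dist z p.1 ≤ p.2

/-- `γ : [0, dist x y] → X` is a geodesic from `x` to `y`. -/
def IsGeodesicSegment {X : Type u} [MetricSpace X] (γ : ℝ → X) (x y : X) : Prop :=
  γ 0 = x ∧ γ (dist x y) = y ∧
    ∀ s ∈ Set.Icc (0 : ℝ) (dist x y), ∀ t ∈ Set.Icc (0 : ℝ) (dist x y),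
      dist (γ s) (γ t) = |s - t|

/-- A metric space is geodesic if any two points are joined by a geodesic. -/
def IsGeodesicSpace (X : Type u) [MetricSpace X] : Prop :=
  ∀ x y : X, ∃ γ : ℝ → X, IsGeodesicSegment γ x y

/-- `γ` restricted to `I ⊆ ℝ` is a `(k, c)`-quasi-geodesic. -/
def IsQuasiGeodesicOn {X : Type u} [MetricSpace X] (k c : ℝ) (γ : ℝ → X) (I : Set ℝ) : Prop :=
  ∀ s ∈ I, ∀ t ∈ I,
    (1 / k) * |s - t| - c ≤ dist (γ s) (γ t) ∧ dist (γ s) (γ t) ≤ k * |s - t| + c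

/-- A subset `Y` is `M`-Morse if every `(k, c)`-quasi-geodesic with endpoints on `Y`
stays in the `M k c`-neighborhood of `Y`. -/
def IsMorse {X : Type u} [MetricSpace X] (M : ℝ → ℝ → ℝ) (Y : Set X) : Prop :=
  ∀ k c : ℝ, 1 ≤ k → 0 ≤ c → ∀ a b : ℝ, ∀ γ : ℝ → X,
    IsQuasiGeodesicOn k c γ (Set.Icc a b) → γ a ∈ Y → γ b ∈ Y →
    ∀ t ∈ Set.Icc a b, Metric.infDist (γ t) Y ≤ M k c

/-- The coarse closest-point projection `π_Y(x) = {y ∈ Y : d(x,y) ≤ d(x,Y) + 1}`. -/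
def coarseProj {X : Type u} [MetricSpace X] (Y : Set X) (x : X) : Set X :=
  {y | y ∈ Y ∧ dist x y ≤ Metric.infDist x Y + 1}

/-- `Y` is `D`-strongly contracting: for every closed ball `B` disjoint from `Y`,
the projection `π_Y(B)` has diameter at most `D`. -/
def IsStronglyContracting {X : Type u} [MetricSpace X] (D : ℝ) (Y : Set X) : Prop :=
  ∀ (c : X) (r : ℝ), Disjoint (Metric.closedBall c r) Y →
    ∀ x₁ ∈ Metric.closedBall c r, ∀ x₂ ∈ Metric.closedBall c r,
      ∀ y₁ ∈ coarseProj Y x₁, ∀ y₂ ∈ coarseProj Y x₂, dist y₁ y₂ ≤ D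

/-- `γ : I → X` is an `(L; D; k, c)`-local strongly contracting quasi-geodesic:
every subsegment of length at most `L` is a `(k,c)`-quasi-geodesic with
`D`-strongly contracting image. -/
def IsLocalSCQuasiGeodesic {X : Type u} [MetricSpace X] (L D k c : ℝ) (γ : ℝ → X)
    (I : Set ℝ) : Prop :=
  ∀ s t : ℝ, s ≤ t → Set.Icc s t ⊆ I → t - s ≤ L →
    IsQuasiGeodesicOn k c γ (Set.Icc s t) ∧ IsStronglyContracting D (γ '' Set.Icc s t)

/-- `γ : I → X` is a `(B; M; k, c)`-local Morse quasi-geodesic. -/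
def IsLocalMorseQuasiGeodesic {X : Type u} [MetricSpace X] (B : ℝ) (M : ℝ → ℝ → ℝ)
    (k c : ℝ) (γ : ℝ → X) (I : Set ℝ) : Prop :=
  ∀ s t : ℝ, s ≤ t → Set.Icc s t ⊆ I → t - s ≤ B →
    IsQuasiGeodesicOn k c γ (Set.Icc s t) ∧ IsMorse M (γ '' Set.Icc s t)

/-- The Morse local-to-global property. -/
def HasMorseLocalToGlobal (X : Type u) [MetricSpace X] : Prop :=
  ∀ (M : ℝ → ℝ → ℝ) (k c : ℝ), 1 ≤ k → 0 ≤ c →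
    ∃ (B : ℝ) (M' : ℝ → ℝ → ℝ) (k' c' : ℝ), 0 ≤ B ∧ 1 ≤ k' ∧ 0 ≤ c' ∧
      ∀ I : Set ℝ, I.OrdConnected → ∀ γ : ℝ → X,
        IsLocalMorseQuasiGeodesic B M k c γ I →
        IsQuasiGeodesicOn k' c' γ I ∧ IsMorse M' (γ '' I)

/-- `A` satisfies Gromov's 4-point condition with constant `C`. -/
def Gromov4 {X : Type u} [MetricSpace X] (C : ℝ) (A : Set X) : Prop :=
  ∀ x ∈ A, ∀ y ∈ A, ∀ w ∈ A, ∀ z ∈ A,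
    dist x y + dist w z ≤ max (dist x z + dist w y) (dist x w + dist y z) + C


/-- In an injective space, any "between" point lies on a genuine geodesic. -/
lemma exists_isometric_through {X : Type u} [MetricSpace X] (hX : IsInjectiveSpace X)
    (y z m : X) (hm : dist y m + dist m z = dist y z) :
    ∃ γ : ℝ → X, γ 0 = y ∧ γ (dist y z) = z ∧ γ (dist y m) = m ∧
      ∀ s ∈ Set.Icc (0:ℝ) (dist y z), ∀ t ∈ Set.Icc (0:ℝ) (dist y z),
        dist (γ s) (γ t) = |s - t| := by
  set d := dist y z with hd
  set t₀ := dist y m with ht₀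
  have ht₀0 : 0 ≤ t₀ := dist_nonneg
  have hmz : dist m z = d - t₀ := by linarith
  have ht₀d : t₀ ≤ d := by have := dist_nonneg (x := m) (y := z); linarith
  set 𝒢 : Set (Set (ℝ × X)) :=
    {F | (∀ p ∈ F, p.1 ∈ Set.Icc (0:ℝ) d) ∧ (0, y) ∈ F ∧ (t₀, m) ∈ F ∧ (d, z) ∈ F ∧
      ∀ p ∈ F, ∀ q ∈ F, dist p.2 q.2 ≤ |p.1 - q.1|} with h𝒢
  have hd0 : (0:ℝ) ≤ d := dist_nonneg
  -- base element
  have hbase : ({(0, y), (t₀, m), (d, z)} : Set (ℝ × X)) ∈ 𝒢 := by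
    refine ⟨?_, by simp, by simp, by simp, ?_⟩
    · rintro p hp
      rcases hp with h | h | h <;> subst h <;>
        simp [Set.mem_Icc, hd0, ht₀0, ht₀d]
    · rintro p hp q hq
      have key : ∀ u v : ℝ × X, u ∈ ({(0, y), (t₀, m), (d, z)} : Set (ℝ × X)) →
          dist u.2 u.2 ≤ |u.1 - u.1| := by intro u v _; simp
      rcases hp with h | h | h <;> rcases hq with h' | h' | h' <;> subst h <;> subst h' <;>
        simp_all [abs_of_nonneg, abs_of_nonpos, dist_comm, abs_sub_comm] <;>
      · rw [abs_of_nonneg (by linarith)]; linarith [dist_nonneg (x := y) (y := m),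
          dist_nonneg (x := m) (y := z)]
  -- Zorn's lemma
  obtain ⟨F, -, hF, hFmax⟩ := zorn_subset_nonempty 𝒢 (fun c hc hchain hcne => by
    obtain ⟨F₀, hF₀⟩ := hcne
    refine ⟨⋃₀ c, ⟨?_, ?_, ?_, ?_, ?_⟩, fun s hs => Set.subset_sUnion_of_mem hs⟩
    · rintro p ⟨F, hFc, hpF⟩; exact (hc hFc).1 p hpF
    · exact ⟨F₀, hF₀, (hc hF₀).2.1⟩
    · exact ⟨F₀, hF₀, (hc hF₀).2.2.1⟩
    · exact ⟨F₀, hF₀, (hc hF₀).2.2.2.1⟩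
    · rintro p ⟨F₁, hF₁c, hp⟩ q ⟨F₂, hF₂c, hq⟩
      rcases hchain.total hF₁c hF₂c with h | h
      · exact (hc hF₂c).2.2.2.2 p (h hp) q hq
      · exact (hc hF₁c).2.2.2.2 p hp q (h hq)) _ hbase
  obtain ⟨hFIcc, hF0, hFt₀, hFd, hFpair⟩ := hF
  -- the maximal graph is total on `Icc 0 d`
  have htotal : ∀ t ∈ Set.Icc (0:ℝ) d, ∃ x : X, (t, x) ∈ F := by
    intro t ht
    by_contra hno
    push_neg at hno
    obtain ⟨w, hw⟩ := hX ((fun p : ℝ × X => (p.2, |p.1 - t|)) '' F)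
      (by rintro _ ⟨p, hp, rfl⟩; exact abs_nonneg _)
      (by rintro _ ⟨p, hp, rfl⟩ _ ⟨q, hq, rfl⟩ -
          calc dist p.2 q.2 ≤ |p.1 - q.1| := hFpair p hp q hq
            _ ≤ |p.1 - t| + |q.1 - t| := by
                have := abs_sub_abs_le_abs_sub (p.1 - t) (q.1 - t)
                have := abs_sub (p.1 - t) (q.1 - t)
                calc |p.1 - q.1| = |(p.1 - t) - (q.1 - t)| := by ring_nf
                  _ ≤ |p.1 - t| + |q.1 - t| := abs_sub _ _)
    have hFF : insert (t, w) F ∈ 𝒢 := by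
      refine ⟨?_, Set.mem_insert_of_mem _ hF0, Set.mem_insert_of_mem _ hFt₀,
        Set.mem_insert_of_mem _ hFd, ?_⟩
      · rintro p (rfl | hp)
        · exact ht
        · exact hFIcc p hp
      · rintro p (rfl | hp) q (rfl | hq)
        · simp
        · have := hw _ ⟨q, hq, rfl⟩
          simpa [dist_comm, abs_sub_comm] using this
        · simpa [dist_comm] using hw _ ⟨p, hp, rfl⟩
        · exact hFpair p hp q hq
    have hsub : insert (t, w) F ⊆ F := hFmax hFF (Set.subset_insert _ _)
    exact hno w (hsub (Set.mem_insert _ _))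
  -- functionality: any two points over the same parameter agree
  have hfun : ∀ t a b, (t, a) ∈ F → (t, b) ∈ F → a = b := by
    intro t a b ha hb
    have := hFpair (t, a) ha (t, b) hb
    simp only [sub_self, abs_zero] at this
    exact dist_le_zero.mp this
  classical
  set γ : ℝ → X := fun t => if h : ∃ x : X, (t, x) ∈ F then h.choose else y with hγ
  have hγmem : ∀ t ∈ Set.Icc (0:ℝ) d, (t, γ t) ∈ F := by
    intro t ht
    have h : ∃ x : X, (t, x) ∈ F := htotal t ht
    simp only [hγ, dif_pos h]
    exact h.choose_spec
  have hγ0 : γ 0 = y := hfun 0 _ _ (hγmem 0 ⟨le_refl _, hd0⟩) hF0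
  have hγd : γ d = z := hfun d _ _ (hγmem d ⟨hd0, le_refl _⟩) hFd
  have hγt₀ : γ t₀ = m := hfun t₀ _ _ (hγmem t₀ ⟨ht₀0, ht₀d⟩) hFt₀
  refine ⟨γ, hγ0, hγd, hγt₀, ?_⟩
  -- distances to the endpoints are exact
  have hcore : ∀ s ∈ Set.Icc (0:ℝ) d, dist y (γ s) = s := by
    intro s hs
    have h1 : dist y (γ s) ≤ s := by
      have := hFpair (0, y) hF0 (s, γ s) (hγmem s hs)
      simpa [abs_of_nonpos, hs.1, abs_of_nonneg hs.1, abs_sub_comm] using this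
    have h2 : dist (γ s) z ≤ d - s := by
      have := hFpair (s, γ s) (hγmem s hs) (d, z) hFd
      rwa [abs_of_nonpos (by linarith [hs.2]), neg_sub] at this
    have h3 : d ≤ dist y (γ s) + dist (γ s) z := dist_triangle y (γ s) z
    linarith
  intro s hs t ht
  have hle : ∀ s ∈ Set.Icc (0:ℝ) d, ∀ t ∈ Set.Icc (0:ℝ) d, dist (γ s) (γ t) ≤ |s - t| :=
    fun s hs t ht => hFpair (s, γ s) (hγmem s hs) (t, γ t) (hγmem t ht)
  have hge : |s - t| ≤ dist (γ s) (γ t) := by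
    have h1 := hcore s hs
    have h2 := hcore t ht
    have h3 := dist_triangle y (γ s) (γ t)
    have h4 := dist_triangle y (γ t) (γ s)
    have h5 : dist (γ t) (γ s) = dist (γ s) (γ t) := dist_comm _ _
    rw [abs_sub_le_iff]
    exact ⟨by linarith, by linarith⟩
  exact le_antisymm (hle s hs t ht) hge

/-- In an injective metric space, for an `M`-Morse subset `Y`, any `x`, any
`y ∈ π_Y(x)` and any `z ∈ Y` satisfy `d(x,z) ≥ d(x,y) + d(y,z) - 2 M(1,0) - 2`. -/
theorem dist_ge_of_mem_coarseProj_of_morse {X : Type u} [MetricSpace X]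
    (hX : IsInjectiveSpace X) (M : ℝ → ℝ → ℝ) (Y : Set X) (hY : IsMorse M Y)
    (x y z : X) (hy : y ∈ coarseProj Y x) (hz : z ∈ Y) :
    dist x y + dist y z - 2 * M 1 0 - 2 ≤ dist x z := by
  obtain ⟨hyY, hyx⟩ := hy
  set a := (dist x y + dist x z - dist y z) / 2 with ha
  set b := (dist x y + dist y z - dist x z) / 2 with hb
  set c := (dist x z + dist y z - dist x y) / 2 with hc
  have txy := dist_triangle x y z
  have tyx := dist_triangle y x z
  have txz := dist_triangle x z y
  have ha0 : 0 ≤ a := by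
    rw [ha]; rw [dist_comm y x] at tyx; linarith
  have hb0 : 0 ≤ b := by rw [hb]; linarith
  have hc0 : 0 ≤ c := by
    rw [hc]; rw [dist_comm z y] at txz; linarith
  obtain ⟨m, hmball⟩ := hX {(x, a), (y, b), (z, c)}
    (by rintro p (rfl | rfl | rfl) <;> assumption)
    (by
      rintro p (rfl | rfl | rfl) q (rfl | rfl | rfl) - <;> simp only [ha, hb, hc] <;>
        [skip; skip; skip; rw [dist_comm y x]; skip; skip; rw [dist_comm z x];
          rw [dist_comm z y]; skip] <;>
      · first
        | (simp only [dist_self]; linarith)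
        | linarith)
  have hmx : dist m x ≤ a := hmball (x, a) (by simp)
  have hmy : dist m y ≤ b := hmball (y, b) (by simp)
  have hmz : dist m z ≤ c := hmball (z, c) (by simp)
  have htri : dist y z ≤ dist y m + dist m z := dist_triangle y m z
  rw [dist_comm m y] at hmy
  have hbc : b + c = dist y z := by rw [hb, hc]; ring
  have hsum : dist y m + dist m z = dist y z := by linarith
  have hymb : dist y m = b := by linarith
  obtain ⟨γ, hγ0, hγd, hγm, hγiso⟩ := exists_isometric_through hX y z m hsum
  have hqg : IsQuasiGeodesicOn 1 0 γ (Set.Icc 0 (dist y z)) := by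
    intro s hs t ht
    rw [hγiso s hs t ht]
    constructor <;> simp
  have hmorse := hY 1 0 le_rfl le_rfl 0 (dist y z) γ hqg (by rw [hγ0]; exact hyY) (by rw [hγd]; exact hz)
    (dist y m) ⟨dist_nonneg, by linarith [dist_nonneg (x := m) (y := z)]⟩
  rw [hγm] at hmorse
  have hlip : Metric.infDist x Y ≤ Metric.infDist m Y + dist x m :=
    Metric.infDist_le_infDist_add_dist
  rw [dist_comm m x] at hmx
  have : dist x y ≤ Metric.infDist x Y + 1 := hyx
  rw [ha] at hmx
  linarith
end

section
/- For all constants D ≥ 0, k ≥ 1, c ≥ 0 there exist L = L(D,k,c) and constants k', c' depending only on D, k, c, such that every (L;D;k,c)-local strongly contracting quasi-geodesic in a geodesic metric space is a (k',c')-quasi-geodesic whose image is a D-strongly contracting subset. -/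
/-!
For a coarse projection `y` of `x` to a `D`-strongly contracting set `Y` in a geodesic space
and `p ∈ Y`, the gate inequality `d(x, y) + d(y, p) ≤ d(x, p) + 3D + 9` holds. On windows of
length `L` it shows that `γ` neither backtracks nor deviates much from the triangle equality.
Cut `[a, b]` at the successive exit times of `γ` from balls of a large fixed radius. If `γ a`
is almost closest to `x` on `[a, b]`, the gate inequality on two consecutive blocks at a time
shows that `d(x, γ ·)` gains a definite amount across each block. With `x = γ a` this gives
the global lower quasi-geodesic bound; applied to almost closest points, it shows that points
at distance at most `4` project to nearby parameters. Bisecting inside a ball disjoint from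
`γ`, and contracting within a single window after each bisection, bounds the parameters of all
projections of the ball; so they lie in one window, whose `D`-contraction gives the claim.
-/

universe u

open Metric Set

/- `gateConst` is the defect of the gate inequality, `backtrackConst` and `triConst` those of
the no-backtracking and coarse triangle estimates on a window, and `localScale`, `globalK`,
`globalC` are the `L`, `k'`, `c'` of the theorem. -/
section Constants

variable (D k c : ℝ)

def gateConst : ℝ := 3 * D + 9

def backtrackConst : ℝ := gateConst D + k * (k * (2 * gateConst D + c + 1)) + c

def triConst : ℝ := 2 * backtrackConst D k c + 2 * gateConst D

def passConst : ℝ := triConst D k c + gateConst D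

def nearConst : ℝ := passConst D k c + 2 * c + 12

def blockMinLength : ℝ := k * (nearConst D k c + gateConst D + c) + 1

def blockRadius : ℝ := k * blockMinLength D k c + 2 * passConst D k c + 2 * c + 20

def blockGain : ℝ := blockRadius D k c - c - 1 - passConst D k c

def blockLength : ℝ := k * (blockRadius D k c + c) + 1

def dyadicConst : ℝ := k * (D + c) + 3 * blockLength D k c

def localScale : ℝ := 2 * dyadicConst D k c + 6 * blockLength D k c

def globalK : ℝ := 3 * k + c

def globalC : ℝ := 2 * blockGain D k c + passConst D k c + c

end Constants

section ConstantBounds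

variable {D k c : ℝ}

lemma nine_le_gateConst (hD : 0 ≤ D) : 9 ≤ gateConst D := by
  unfold gateConst; linarith

lemma passConst_nonneg (hD : 0 ≤ D) (hk : 1 ≤ k) (hc : 0 ≤ c) : 0 ≤ passConst D k c := by
  have h9 := nine_le_gateConst hD
  have : 0 ≤ k * (k * (2 * gateConst D + c + 1)) := by
    have := mul_nonneg (by linarith : (0 : ℝ) ≤ k) (by linarith : 0 ≤ 2 * gateConst D + c + 1)
    exact mul_nonneg (by linarith) this
  unfold passConst triConst backtrackConst; linarith

lemma one_le_blockMinLength (hD : 0 ≤ D) (hk : 1 ≤ k) (hc : 0 ≤ c) :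
    1 ≤ blockMinLength D k c := by
  have := passConst_nonneg hD hk hc
  have := nine_le_gateConst hD
  have : 0 ≤ k * (nearConst D k c + gateConst D + c) :=
    mul_nonneg (by linarith) (by unfold nearConst; linarith)
  unfold blockMinLength; linarith

lemma blockGain_eq : blockGain D k c = k * blockMinLength D k c + passConst D k c + c + 19 := by
  unfold blockGain blockRadius; ring

lemma passConst_add_le_blockGain (hD : 0 ≤ D) (hk : 1 ≤ k) (hc : 0 ≤ c) :
    passConst D k c + 19 ≤ blockGain D k c := by
  have := one_le_blockMinLength hD hk hc
  rw [blockGain_eq]; nlinarith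

lemma mul_blockMinLength_add_le_blockRadius (hD : 0 ≤ D) (hk : 1 ≤ k) (hc : 0 ≤ c) :
    k * blockMinLength D k c + c ≤ blockRadius D k c := by
  have := passConst_nonneg hD hk hc
  unfold blockRadius; linarith

lemma blockRadius_nonneg (hD : 0 ≤ D) (hk : 1 ≤ k) (hc : 0 ≤ c) :
    0 ≤ blockRadius D k c := by
  have := one_le_blockMinLength hD hk hc
  have := mul_blockMinLength_add_le_blockRadius hD hk hc
  nlinarith

lemma one_le_blockLength (hD : 0 ≤ D) (hk : 1 ≤ k) (hc : 0 ≤ c) :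
    1 ≤ blockLength D k c := by
  have := blockRadius_nonneg hD hk hc
  have : 0 ≤ k * (blockRadius D k c + c) := mul_nonneg (by linarith) (by linarith)
  unfold blockLength; linarith

lemma blockLength_le_globalK_mul (hD : 0 ≤ D) (hk : 1 ≤ k) (hc : 0 ≤ c) :
    blockLength D k c ≤ globalK k c * blockGain D k c := by
  have hℓ := one_le_blockMinLength hD hk hc
  have hp := passConst_nonneg hD hk hc
  have hg : blockRadius D k c + c + 1 ≤ 3 * blockGain D k c := by
    rw [blockGain_eq]; unfold blockRadius; nlinarith
  have hg0 : 0 ≤ blockGain D k c := by rw [blockGain_eq]; nlinarith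
  unfold blockLength globalK; nlinarith

lemma two_mul_blockLength_le_localScale (hD : 0 ≤ D) (hk : 1 ≤ k) (hc : 0 ≤ c) :
    2 * blockLength D k c ≤ localScale D k c := by
  have := one_le_blockLength hD hk hc
  have : 0 ≤ k * (D + c) := mul_nonneg (by linarith) (by linarith)
  unfold localScale dyadicConst; linarith

lemma two_mul_dyadicConst_le_localScale (hD : 0 ≤ D) (hk : 1 ≤ k) (hc : 0 ≤ c) :
    2 * dyadicConst D k c ≤ localScale D k c := by
  have := one_le_blockLength hD hk hc
  unfold localScale; linarith

end ConstantBounds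

section Geodesics

variable {X : Type u} [MetricSpace X]

lemma IsGeodesicSegment.dist_left {γ : ℝ → X} {x y : X} (hγ : IsGeodesicSegment γ x y)
    {θ : ℝ} (hθ : θ ∈ Icc 0 (dist x y)) : dist x (γ θ) = θ := by
  have h := hγ.2.2 0 ⟨le_rfl, dist_nonneg⟩ θ hθ
  rw [hγ.1, zero_sub, abs_neg, abs_of_nonneg hθ.1] at h
  exact h

lemma IsGeodesicSegment.dist_right {γ : ℝ → X} {x y : X} (hγ : IsGeodesicSegment γ x y)
    {θ : ℝ} (hθ : θ ∈ Icc 0 (dist x y)) : dist (γ θ) y = dist x y - θ := by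
  have h := hγ.2.2 θ hθ (dist x y) ⟨dist_nonneg, le_rfl⟩
  rw [hγ.2.1, abs_sub_comm, abs_of_nonneg (by linarith [hθ.2])] at h
  exact h

lemma IsGeodesicSpace.exists_dist_eq (hX : IsGeodesicSpace X) (x p : X) {ρ : ℝ} (h0 : 0 ≤ ρ)
    (h1 : ρ ≤ dist x p) : ∃ z, dist x z = ρ ∧ dist z p = dist x p - ρ := by
  obtain ⟨γ, hγ⟩ := hX x p
  exact ⟨γ ρ, hγ.dist_left ⟨h0, h1⟩, hγ.dist_right ⟨h0, h1⟩⟩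

end Geodesics

section CoarseProjection

variable {X : Type u} [MetricSpace X] {Y W : Set X} {x y : X}

lemma coarseProj_nonempty (hY : Y.Nonempty) (x : X) : (coarseProj Y x).Nonempty := by
  obtain ⟨y, hy, hd⟩ := (infDist_lt_iff hY).1 (lt_add_one (infDist x Y))
  exact ⟨y, hy, hd.le⟩

lemma mem_coarseProj_of_subset (hWY : W ⊆ Y) (hy : y ∈ coarseProj Y x) (hyW : y ∈ W) :
    y ∈ coarseProj W x :=
  ⟨hyW, hy.2.trans (add_le_add_left (infDist_le_infDist_of_subset hWY ⟨y, hyW⟩) 1)⟩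

end CoarseProjection

namespace IsStronglyContracting

variable {X : Type u} [MetricSpace X] {D : ℝ} {Y : Set X}

/-- Induction on `⌈dist x p⌉`: unless `x` is close to `Y`, moving `x` towards `p` by
`d(x, Y) - 1` stays in a ball disjoint from `Y`, so the projection moves by at most `D`. -/
theorem dist_coarseProj_add_infDist_le (hX : IsGeodesicSpace X) (hD : 0 ≤ D)
    (hY : IsStronglyContracting D Y) {x y p : X} (hy : y ∈ coarseProj Y x) (hp : p ∈ Y) :
    dist y p + infDist x Y + 1 ≤ dist x p + gateConst D := by
  have far : ∀ {x y : X}, y ∈ coarseProj Y x → dist y p ≤ dist x p + infDist x Y + 1 :=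
    fun {x y} hy => by linarith [dist_triangle_left y p x, hy.2]
  have near : ∀ {x y : X}, y ∈ coarseProj Y x → infDist x Y ≤ D + 3 →
      dist y p + infDist x Y + 1 ≤ dist x p + gateConst D := by
    intro x y hy hr
    have := far hy
    unfold gateConst; linarith
  obtain ⟨n, hn⟩ := exists_nat_ge (dist x p)
  induction n generalizing x y with
  | zero =>
    push_cast at hn
    exact near hy (by linarith [infDist_le_dist_of_mem (x := x) hp])
  | succ n ih =>
    set r := infDist x Y
    by_cases hr : r ≤ D + 3
    · exact near hy hr
    have hrp : r ≤ dist x p := infDist_le_dist_of_mem hp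
    obtain ⟨x', hxx', hx'p⟩ := hX.exists_dist_eq x p (ρ := r - 1) (by linarith) (by linarith)
    have hdisj : Disjoint (closedBall x (r - 1)) Y := by
      refine disjoint_left.2 fun w hw hwY => ?_
      have := infDist_le_dist_of_mem (x := x) hwY
      rw [mem_closedBall, dist_comm] at hw
      linarith
    obtain ⟨y', hy'⟩ := coarseProj_nonempty ⟨p, hp⟩ x'
    have hyy' : dist y y' ≤ D :=
      hY x (r - 1) hdisj x (mem_closedBall_self (by linarith)) x'
        (by rw [mem_closedBall, dist_comm, hxx']) y hy y' hy'
    have hr' : r ≤ infDist x' Y + (r - 1) := hxx' ▸ infDist_le_infDist_add_dist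
    have := dist_triangle y y' p
    by_cases hr'' : infDist x' Y ≤ D + 3
    · have := far hy'
      unfold gateConst; linarith
    · have := ih hy' (by push_cast at hn; linarith)
      linarith

theorem dist_add_dist_coarseProj_le (hX : IsGeodesicSpace X) (hD : 0 ≤ D)
    (hY : IsStronglyContracting D Y) {x y p : X} (hy : y ∈ coarseProj Y x) (hp : p ∈ Y) :
    dist x y + dist y p ≤ dist x p + gateConst D := by
  have := hY.dist_coarseProj_add_infDist_le hX hD hy hp
  linarith [hy.2]

theorem dist_coarseProj_le_of_dist_add_dist_eq (hX : IsGeodesicSpace X) (hD : 0 ≤ D)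
    (hY : IsStronglyContracting D Y) {p q z y : X} (hp : p ∈ Y) (hq : q ∈ Y)
    (hz : dist p z + dist z q = dist p q) (hy : y ∈ coarseProj Y z) :
    dist z y ≤ gateConst D := by
  have hzp := hY.dist_add_dist_coarseProj_le hX hD hy hp
  have hzq := hY.dist_add_dist_coarseProj_le hX hD hy hq
  have := dist_triangle_left p q y
  rw [dist_comm z p] at hzp
  linarith

end IsStronglyContracting

namespace IsQuasiGeodesicOn

variable {X : Type u} [MetricSpace X] {k c : ℝ} {γ : ℝ → X} {S : Set ℝ} {s t : ℝ}

lemma of_le (h : ∀ s ∈ S, ∀ t ∈ S, s ≤ t →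
      (1 / k) * (t - s) - c ≤ dist (γ s) (γ t) ∧ dist (γ s) (γ t) ≤ k * (t - s) + c) :
    IsQuasiGeodesicOn k c γ S := by
  intro s hs t ht
  rcases le_total s t with hst | hts
  · rw [abs_sub_comm, abs_of_nonneg (by linarith)]
    exact h s hs t ht hst
  · rw [abs_of_nonneg (by linarith), dist_comm]
    exact h t ht s hs hts

lemma dist_le (h : IsQuasiGeodesicOn k c γ S) (hs : s ∈ S) (ht : t ∈ S) (hst : s ≤ t) :
    dist (γ s) (γ t) ≤ k * (t - s) + c := by
  simpa [abs_sub_comm s t, abs_of_nonneg (sub_nonneg.2 hst)] using (h s hs t ht).2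

lemma le_dist (h : IsQuasiGeodesicOn k c γ S) (hs : s ∈ S) (ht : t ∈ S) (hst : s ≤ t) :
    (1 / k) * (t - s) - c ≤ dist (γ s) (γ t) := by
  simpa [abs_sub_comm s t, abs_of_nonneg (sub_nonneg.2 hst)] using (h s hs t ht).1

lemma abs_sub_le (h : IsQuasiGeodesicOn k c γ S) (hk : 0 < k) (hs : s ∈ S) (ht : t ∈ S) :
    |s - t| ≤ k * (dist (γ s) (γ t) + c) := by
  have := (h s hs t ht).1
  rw [one_div_mul_eq_div, sub_le_iff_le_add, div_le_iff₀ hk] at this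
  linarith

end IsQuasiGeodesicOn

namespace IsLocalSCQuasiGeodesic

variable {X : Type u} [MetricSpace X] {L D k c : ℝ} {γ : ℝ → X} {I : Set ℝ} {a b : ℝ}

lemma quasiGeodesicOn_Icc (hγ : IsLocalSCQuasiGeodesic L D k c γ I) (hI : I.OrdConnected)
    (ha : a ∈ I) (hb : b ∈ I) (hab : a ≤ b) (hL : b - a ≤ L) :
    IsQuasiGeodesicOn k c γ (Icc a b) :=
  (hγ a b hab (hI.out ha hb) hL).1

lemma stronglyContracting_Icc (hγ : IsLocalSCQuasiGeodesic L D k c γ I) (hI : I.OrdConnected)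
    (ha : a ∈ I) (hb : b ∈ I) (hab : a ≤ b) (hL : b - a ≤ L) :
    IsStronglyContracting D (γ '' Icc a b) :=
  (hγ a b hab (hI.out ha hb) hL).2

lemma dist_le (hγ : IsLocalSCQuasiGeodesic L D k c γ I) (hI : I.OrdConnected)
    (ha : a ∈ I) (hb : b ∈ I) (hab : a ≤ b) (hL : b - a ≤ L) :
    dist (γ a) (γ b) ≤ k * (b - a) + c :=
  (hγ.quasiGeodesicOn_Icc hI ha hb hab hL).dist_le (left_mem_Icc.2 hab) (right_mem_Icc.2 hab) hab

lemma le_dist (hγ : IsLocalSCQuasiGeodesic L D k c γ I) (hI : I.OrdConnected)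
    (ha : a ∈ I) (hb : b ∈ I) (hab : a ≤ b) (hL : b - a ≤ L) :
    (1 / k) * (b - a) - c ≤ dist (γ a) (γ b) :=
  (hγ.quasiGeodesicOn_Icc hI ha hb hab hL).le_dist (left_mem_Icc.2 hab) (right_mem_Icc.2 hab) hab

end IsLocalSCQuasiGeodesic

lemma exists_le_le_succ {u : ℕ → ℝ} {v : ℝ} {N : ℕ} (h0 : u 0 ≤ v) (hN : v ≤ u (N + 1)) :
    ∃ i ≤ N, u i ≤ v ∧ v ≤ u (i + 1) := by
  induction N with
  | zero => exact ⟨0, le_rfl, h0, hN⟩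
  | succ N ih =>
    by_cases h : u (N + 1) ≤ v
    · exact ⟨N + 1, le_rfl, h, hN⟩
    · obtain ⟨i, hi, h⟩ := ih (not_le.1 h).le
      exact ⟨i, hi.trans N.le_succ, h⟩

section NoBacktracking

variable {X : Type u} [MetricSpace X] {L D k c : ℝ} {γ : ℝ → X} {I : Set ℝ}

theorem IsStronglyContracting.exists_seq_dist_le_gateConst (hX : IsGeodesicSpace X)
    (hD : 0 ≤ D) {a b : ℝ} (hY : IsStronglyContracting D (γ '' Icc a b)) (hab : a ≤ b)
    {g : ℝ → X} (hg : IsGeodesicSegment g (γ a) (γ b)) :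
    ∃ u : ℕ → ℝ, u 0 = a ∧ u (⌈dist (γ a) (γ b)⌉₊ + 1) = b ∧
      ∀ i, u i ∈ Icc a b ∧
        dist (g (min i (dist (γ a) (γ b)))) (γ (u i)) ≤ gateConst D := by
  have ha : a ∈ Icc a b := left_mem_Icc.2 hab
  have hb : b ∈ Icc a b := right_mem_Icc.2 hab
  have h9 := nine_le_gateConst hD
  set d := dist (γ a) (γ b)
  have hshadow : ∀ θ ∈ Icc 0 d, ∃ t ∈ Icc a b, dist (g θ) (γ t) ≤ gateConst D := by
    intro θ hθ
    obtain ⟨y, hy⟩ := coarseProj_nonempty ⟨γ a, mem_image_of_mem γ ha⟩ (g θ)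
    obtain ⟨t, ht, rfl⟩ := hy.1
    refine ⟨t, ht, hY.dist_coarseProj_le_of_dist_add_dist_eq hX hD (mem_image_of_mem γ ha)
      (mem_image_of_mem γ hb) ?_ hy⟩
    rw [hg.dist_left hθ, hg.dist_right hθ]; ring
  choose! F hF using hshadow
  refine ⟨fun i => if i = 0 then a else if d ≤ i then b else F (min i d), if_pos rfl,
    if_neg (Nat.succ_ne_zero _) |>.trans (if_pos (by push_cast; linarith [Nat.le_ceil d])),
    fun i => ?_⟩
  by_cases h0 : i = 0
  · have : min (i : ℝ) d = 0 := by simp only [h0, Nat.cast_zero]; exact min_eq_left dist_nonneg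
    simp only [if_pos h0, this, hg.1, dist_self]
    exact ⟨ha, by linarith⟩
  by_cases hd : d ≤ i
  · have hgd : g (min i d) = γ b := (congrArg g (min_eq_right hd)).trans hg.2.1
    simp only [if_neg h0, if_pos hd, hgd, dist_self]
    exact ⟨hb, by linarith⟩
  · simp only [if_neg h0, if_neg hd]
    exact hF _ ⟨le_min i.cast_nonneg dist_nonneg, min_le_right _ _⟩

/-- Along the shadows `γ (u i)` of a geodesic from `γ a` to `γ b`, consecutive parameters
are at most `k (2 gateConst + c + 1)` apart, so every `v` lies shortly after some `u i`. -/
theorem IsStronglyContracting.dist_le_add_backtrackConst (hX : IsGeodesicSpace X) (hD : 0 ≤ D)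
    (hk : 1 ≤ k) {a b : ℝ} (hY : IsStronglyContracting D (γ '' Icc a b))
    (hγ : IsQuasiGeodesicOn k c γ (Icc a b)) {v : ℝ} (hv : v ∈ Icc a b) :
    dist (γ a) (γ v) ≤ dist (γ a) (γ b) + backtrackConst D k c := by
  obtain ⟨g, hg⟩ := hX (γ a) (γ b)
  set d := dist (γ a) (γ b)
  obtain ⟨u, hu0, hN, hu⟩ := hY.exists_seq_dist_le_gateConst hX hD (hv.1.trans hv.2) hg
  have hθ : ∀ i : ℕ, min (i : ℝ) d ∈ Icc 0 d :=
    fun i => ⟨le_min i.cast_nonneg dist_nonneg, min_le_right _ _⟩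
  have hstep : ∀ i, u (i + 1) ≤ u i + k * (2 * gateConst D + c + 1) := by
    intro i
    have hθθ : dist (g (min i d)) (g (min (i + 1 : ℕ) d)) ≤ 1 := by
      rw [hg.2.2 _ (hθ i) _ (hθ (i + 1))]
      refine (abs_min_sub_min_le_max _ _ _ _).trans ?_
      simp
    have : dist (γ (u (i + 1))) (γ (u i)) ≤ 2 * gateConst D + 1 := by
      rw [dist_comm]
      linarith [dist_triangle4 (γ (u i)) (g (min i d)) (g (min (i + 1 : ℕ) d)) (γ (u (i + 1))),
        dist_comm (γ (u i)) (g (min i d)), (hu i).2, (hu (i + 1)).2]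
    have := hγ.abs_sub_le (by linarith) (hu (i + 1)).1 (hu i).1
    have := le_abs_self (u (i + 1) - u i)
    nlinarith
  obtain ⟨i, -, hi, hvi⟩ := exists_le_le_succ (hu0 ▸ hv.1) (hN ▸ hv.2)
  have := hγ.dist_le (hu i).1 hv hi
  have : k * (v - u i) ≤ k * (k * (2 * gateConst D + c + 1)) :=
    mul_le_mul_of_nonneg_left (by linarith [hstep i]) (by linarith)
  unfold backtrackConst
  linarith [dist_triangle4 (γ a) (g (min i d)) (γ (u i)) (γ v), hg.dist_left (hθ i), (hθ i).2,
    (hu i).2]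

theorem IsLocalSCQuasiGeodesic.dist_add_dist_le_add_triConst (hX : IsGeodesicSpace X)
    (hD : 0 ≤ D) (hk : 1 ≤ k) (hγ : IsLocalSCQuasiGeodesic L D k c γ I) (hI : I.OrdConnected)
    {u v w : ℝ} (hu : u ∈ I) (hw : w ∈ I) (huv : u ≤ v) (hvw : v ≤ w) (hL : w - u ≤ L) :
    dist (γ u) (γ v) + dist (γ v) (γ w) ≤ dist (γ u) (γ w) + triConst D k c := by
  have hv : v ∈ I := hI.out hu hw ⟨huv, hvw⟩
  have hZ := hγ.stronglyContracting_Icc hI hv hw hvw (by linarith)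
  have hvZ : γ v ∈ γ '' Icc v w := mem_image_of_mem γ (left_mem_Icc.2 hvw)
  have hwZ : γ w ∈ γ '' Icc v w := mem_image_of_mem γ (right_mem_Icc.2 hvw)
  have hinf : dist (γ u) (γ v) - backtrackConst D k c ≤ infDist (γ u) (γ '' Icc v w) := by
    refine (le_infDist ⟨_, hvZ⟩).2 ?_
    rintro _ ⟨q, hq, rfl⟩
    have hqI : q ∈ I := hI.out hv hw hq
    have huq : u ≤ q := huv.trans hq.1
    have hLq : q - u ≤ L := by linarith [hq.2]
    have := (hγ.stronglyContracting_Icc hI hu hqI huq hLq).dist_le_add_backtrackConst hX hD hk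
      (hγ.quasiGeodesicOn_Icc hI hu hqI huq hLq) ⟨huv, hq.1⟩
    linarith
  obtain ⟨y, hy⟩ := coarseProj_nonempty ⟨_, hvZ⟩ (γ u)
  have := hZ.dist_add_dist_coarseProj_le hX hD hy hvZ
  have := hZ.dist_add_dist_coarseProj_le hX hD hy hwZ
  have := infDist_le_dist_of_mem (x := γ u) hy.1
  have := dist_triangle_left (γ v) (γ w) y
  unfold triConst; linarith

end NoBacktracking

section Blocks

variable {X : Type u} [MetricSpace X] {L D k c : ℝ} {γ : ℝ → X} {I : Set ℝ} {R b p : ℝ}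

def blockExitSet (γ : ℝ → X) (R b p : ℝ) : Set ℝ :=
  {v | v ∈ Icc p b ∧ R ≤ dist (γ p) (γ v)}

open Classical in
noncomputable def nextBlockPoint (γ : ℝ → X) (R b p : ℝ) : ℝ :=
  if (blockExitSet γ R b p).Nonempty then sInf (blockExitSet γ R b p) else b

lemma bddBelow_blockExitSet : BddBelow (blockExitSet γ R b p) := ⟨p, fun _ hv => hv.1.1⟩

lemma nextBlockPoint_of_nonempty (h : (blockExitSet γ R b p).Nonempty) :
    nextBlockPoint γ R b p = sInf (blockExitSet γ R b p) := if_pos h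

lemma nextBlockPoint_of_not_nonempty (h : ¬(blockExitSet γ R b p).Nonempty) :
    nextBlockPoint γ R b p = b := if_neg h

lemma nextBlockPoint_le_right : nextBlockPoint γ R b p ≤ b := by
  by_cases h : (blockExitSet γ R b p).Nonempty
  · rw [nextBlockPoint_of_nonempty h]
    exact (csInf_le bddBelow_blockExitSet h.some_mem).trans h.some_mem.1.2
  · rw [nextBlockPoint_of_not_nonempty h]

lemma nextBlockPoint_mem (hpb : p ≤ b) : nextBlockPoint γ R b p ∈ Icc p b := by
  refine ⟨?_, nextBlockPoint_le_right⟩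
  by_cases h : (blockExitSet γ R b p).Nonempty
  · rw [nextBlockPoint_of_nonempty h]
    exact le_csInf h fun _ hv => hv.1.1
  · rwa [nextBlockPoint_of_not_nonempty h]

lemma dist_lt_of_lt_nextBlockPoint {v : ℝ} (hpv : p ≤ v) (hv : v < nextBlockPoint γ R b p) :
    dist (γ p) (γ v) < R := by
  by_contra! h
  have hvE : v ∈ blockExitSet γ R b p := ⟨⟨hpv, hv.le.trans nextBlockPoint_le_right⟩, h⟩
  rw [nextBlockPoint_of_nonempty ⟨v, hvE⟩] at hv
  exact hv.not_ge (csInf_le bddBelow_blockExitSet hvE)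

namespace IsLocalSCQuasiGeodesic

variable (hγ : IsLocalSCQuasiGeodesic L D k c γ I) (hI : I.OrdConnected) (hp : p ∈ I)
  (hb : b ∈ I) (hk : 1 ≤ k) (hc : 0 ≤ c) (hL : k * (R + c) + 1 ≤ L)
include hγ hI hp hb hk hc hL

lemma nextBlockPoint_le_add (hR : 0 ≤ R) :
    nextBlockPoint γ R b p ≤ p + (k * (R + c) + 1) := by
  set G := k * (R + c) + 1
  have hG : 1 ≤ G := by nlinarith
  by_cases hfit : p + G ≤ b
  · have hpG : p + G ∈ I := hI.out hp hb ⟨by linarith, hfit⟩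
    have hE : p + G ∈ blockExitSet γ R b p := by
      refine ⟨⟨by linarith, hfit⟩, ?_⟩
      have := hγ.le_dist hI hp hpG (by linarith) (by linarith)
      have hk' : (1 / k) * (p + G - p) = R + c + 1 / k := by
        simp only [G]; field_simp; ring
      have : 0 ≤ 1 / k := by positivity
      linarith
    rw [nextBlockPoint_of_nonempty ⟨_, hE⟩]
    exact csInf_le bddBelow_blockExitSet hE
  · exact nextBlockPoint_le_right.trans (by linarith)

lemma dist_le_of_mem_Icc_nextBlockPoint (hR : 0 ≤ R) {v : ℝ}
    (hv : v ∈ Icc p (nextBlockPoint γ R b p)) :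
    dist (γ p) (γ v) ≤ R + c + 1 := by
  have hk0 : 0 < k := by linarith
  have hvb : v ≤ b := hv.2.trans nextBlockPoint_le_right
  set w := max p (v - 1 / k)
  have hpw : p ≤ w := le_max_left _ _
  have hwv : w ≤ v := max_le hv.1 (by linarith [one_div_pos.2 hk0])
  have hpw' : dist (γ p) (γ w) ≤ R := by
    rcases max_choice p (v - 1 / k) with h | h
    · rw [show w = p from h, dist_self]; exact hR
    · refine (dist_lt_of_lt_nextBlockPoint hpw (lt_of_lt_of_le ?_ hv.2)).le
      rw [show w = v - 1 / k from h]; linarith [one_div_pos.2 hk0]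
  have hvw : v - w ≤ 1 / k := by linarith [le_max_right p (v - 1 / k)]
  have h1k : 1 / k ≤ 1 := by rw [div_le_one hk0]; exact hk
  have := hγ.dist_le hI (hI.out hp hb ⟨hpw, hwv.trans hvb⟩) (hI.out hp hb ⟨hv.1, hvb⟩) hwv
    (by nlinarith)
  have : k * (v - w) ≤ 1 := by
    calc k * (v - w) ≤ k * (1 / k) := mul_le_mul_of_nonneg_left hvw hk0.le
      _ = 1 := by field_simp
  linarith [dist_triangle (γ p) (γ w) (γ v)]

lemma le_dist_nextBlockPoint (hR : 0 ≤ R) (hpb : p ≤ b)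
    (hne : (blockExitSet γ R b p).Nonempty) :
    R - c - 1 ≤ dist (γ p) (γ (nextBlockPoint γ R b p)) := by
  have hk0 : 0 < k := by linarith
  have hmem := nextBlockPoint_mem (γ := γ) (R := R) hpb
  rw [nextBlockPoint_of_nonempty hne] at hmem ⊢
  obtain ⟨e, he, hlt⟩ := Real.lt_sInf_add_pos hne (one_div_pos.2 hk0)
  have hse : sInf (blockExitSet γ R b p) ≤ e := csInf_le bddBelow_blockExitSet he
  have h1k : 1 / k ≤ 1 := by rw [div_le_one hk0]; exact hk
  have := hγ.dist_le hI (hI.out hp hb hmem) (hI.out hp hb he.1) hse (by nlinarith)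
  have : k * (e - sInf (blockExitSet γ R b p)) ≤ 1 := by
    calc k * (e - sInf (blockExitSet γ R b p)) ≤ k * (1 / k) :=
          mul_le_mul_of_nonneg_left (by linarith) hk0.le
      _ = 1 := by field_simp
  linarith [he.2, dist_triangle (γ p) (γ (sInf (blockExitSet γ R b p))) (γ e)]

lemma add_le_nextBlockPoint (hne : (blockExitSet γ R b p).Nonempty) {ℓ : ℝ}
    (hℓ : k * ℓ + c ≤ R) : p + ℓ ≤ nextBlockPoint γ R b p := by
  rw [nextBlockPoint_of_nonempty hne]
  refine le_csInf hne fun v hv => ?_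
  by_contra! hlt
  have hℓ0 : 0 ≤ ℓ := by linarith [hv.1.1]
  have hℓk : ℓ ≤ k * ℓ := le_mul_of_one_le_left hℓ0 hk
  have hRk : R ≤ k * (R + c) := by nlinarith
  have := hγ.dist_le hI hp (hI.out hp hb hv.1) hv.1.1 (by linarith)
  have : k * (v - p) < k * ℓ := mul_lt_mul_of_pos_left (by linarith) (by linarith)
  linarith [hv.2]

end IsLocalSCQuasiGeodesic

structure IsBlockDecomposition (D k c : ℝ) (γ : ℝ → X) (a b : ℝ) (M : ℕ)
    (τ : ℕ → ℝ) : Prop where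
  zero : τ 0 = a
  last : τ (M + 1) = b
  mem : ∀ m, τ m ∈ Icc a b
  le_succ : ∀ m, τ m ≤ τ (m + 1)
  succ_le : ∀ m, τ (m + 1) ≤ τ m + blockLength D k c
  dist_le : ∀ m, ∀ v ∈ Icc (τ m) (τ (m + 1)),
    dist (γ (τ m)) (γ v) ≤ blockRadius D k c + c + 1
  le_dist : ∀ m < M, blockRadius D k c - c - 1 ≤ dist (γ (τ m)) (γ (τ (m + 1)))
  add_le_succ : ∀ m < M, τ m + blockMinLength D k c ≤ τ (m + 1)

theorem IsLocalSCQuasiGeodesic.exists_isBlockDecomposition (hD : 0 ≤ D) (hk : 1 ≤ k)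
    (hc : 0 ≤ c) (hγ : IsLocalSCQuasiGeodesic L D k c γ I) (hI : I.OrdConnected)
    (hL : blockLength D k c ≤ L) {a : ℝ} (ha : a ∈ I) (hb : b ∈ I) (hab : a ≤ b) :
    ∃ M τ, IsBlockDecomposition D k c γ a b M τ := by
  set next := nextBlockPoint γ (blockRadius D k c) b
  set τ : ℕ → ℝ := fun m => next^[m] a
  have hτ : ∀ m, τ (m + 1) = next (τ m) := fun m => Function.iterate_succ_apply' next m a
  have hmem : ∀ m, τ m ∈ Icc a b := by
    intro m
    induction m with
    | zero => exact ⟨le_rfl, hab⟩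
    | succ m ih =>
      rw [hτ]
      exact ⟨ih.1.trans (nextBlockPoint_mem ih.2).1, (nextBlockPoint_mem ih.2).2⟩
  have hτI : ∀ m, τ m ∈ I := fun m => hI.out ha hb (hmem m)
  have hR := blockRadius_nonneg hD hk hc
  have hℓ := one_le_blockMinLength hD hk hc
  have hℓR := mul_blockMinLength_add_le_blockRadius hD hk hc
  have hstop : ∃ m, ¬(blockExitSet γ (blockRadius D k c) b (τ m)).Nonempty := by
    by_contra! hne
    have hgrow : ∀ m : ℕ, a + m ≤ τ m := by
      intro m
      induction m with
      | zero => simp [τ]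
      | succ m ih =>
        have := hγ.add_le_nextBlockPoint hI (hτI m) hb hk hc hL (hne m) hℓR
        rw [hτ]; push_cast; linarith
    obtain ⟨n, hn⟩ := exists_nat_gt (b - a)
    linarith [hgrow n, (hmem n).2]
  classical
  refine ⟨Nat.find hstop, τ, ⟨rfl, ?_, hmem, fun m => ?_, fun m => ?_, fun m => ?_,
    fun m hm => ?_, fun m hm => ?_⟩⟩
  · rw [hτ]; exact nextBlockPoint_of_not_nonempty (Nat.find_spec hstop)
  · rw [hτ]; exact (nextBlockPoint_mem (hmem m).2).1
  · rw [hτ]; exact hγ.nextBlockPoint_le_add hI (hτI m) hb hk hc hL hR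
  · rw [hτ]; exact fun v hv => hγ.dist_le_of_mem_Icc_nextBlockPoint hI (hτI m) hb hk hc hL hR hv
  · rw [hτ]; exact hγ.le_dist_nextBlockPoint hI (hτI m) hb hk hc hL hR (hmem m).2
      (not_not.1 (Nat.find_min hstop hm))
  · rw [hτ]; exact hγ.add_le_nextBlockPoint hI (hτI m) hb hk hc hL
      (not_not.1 (Nat.find_min hstop hm)) (by nlinarith)

end Blocks

section Growth

variable {X : Type u} [MetricSpace X] {L D k c : ℝ} {γ : ℝ → X} {I : Set ℝ}

/-- By the gate inequality at `γ s`, the projection of `x` to the window has parameter at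
most `r`; the triangle estimate from there to `r` and `v` does the rest. -/
theorem IsLocalSCQuasiGeodesic.dist_add_dist_le_add_passConst (hX : IsGeodesicSpace X)
    (hD : 0 ≤ D) (hk : 1 ≤ k) (hc : 0 ≤ c) (hγ : IsLocalSCQuasiGeodesic L D k c γ I)
    (hI : I.OrdConnected) {x : X} {s r t : ℝ} (hs : s ∈ I) (ht : t ∈ I)
    (hsr : s + blockMinLength D k c ≤ r) (hrt : r ≤ t) (hL : t - s ≤ L)
    (hx : dist x (γ s) - nearConst D k c ≤ infDist x (γ '' Icc s t)) {v : ℝ}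
    (hv : v ∈ Icc r t) :
    dist x (γ r) + dist (γ r) (γ v) ≤ dist x (γ v) + passConst D k c := by
  have hst : s ≤ t := by linarith [one_le_blockMinLength hD hk hc]
  have hZ := hγ.stronglyContracting_Icc hI hs ht hst hL
  have hsZ : γ s ∈ γ '' Icc s t := mem_image_of_mem γ (left_mem_Icc.2 hst)
  obtain ⟨y, hy⟩ := coarseProj_nonempty ⟨_, hsZ⟩ x
  obtain ⟨q, hq, rfl⟩ := hy.1
  have := hZ.dist_add_dist_coarseProj_le hX hD hy hsZ
  have := infDist_le_dist_of_mem (x := x) hy.1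
  have hqs : dist (γ q) (γ s) + c ≤ nearConst D k c + gateConst D + c := by linarith
  have hqr : q ≤ r := by
    have := (hγ.quasiGeodesicOn_Icc hI hs ht hst hL).abs_sub_le (by linarith) hq
      (left_mem_Icc.2 hst)
    have := mul_le_mul_of_nonneg_left hqs (by linarith : (0 : ℝ) ≤ k)
    have := le_abs_self (q - s)
    unfold blockMinLength at hsr; linarith
  have hv' : v ∈ Icc s t := ⟨hq.1.trans (hqr.trans hv.1), hv.2⟩
  have := hγ.dist_add_dist_le_add_triConst hX hD hk hI (hI.out hs ht hq) (hI.out hs ht hv') hqr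
    hv.1 (by linarith [hq.1, hv.2])
  have := hZ.dist_add_dist_coarseProj_le hX hD hy (mem_image_of_mem γ hv')
  have := dist_triangle x (γ q) (γ r)
  unfold passConst; linarith

end Growth

namespace IsBlockDecomposition

variable {X : Type u} [MetricSpace X] {L D k c : ℝ} {γ : ℝ → X} {I : Set ℝ} {a b : ℝ}
  {M : ℕ} {τ : ℕ → ℝ}

lemma le_add_mul (hB : IsBlockDecomposition D k c γ a b M τ) (m : ℕ) :
    τ m ≤ a + m * blockLength D k c := by
  induction m with
  | zero => simp [hB.zero]
  | succ m ih => push_cast; linarith [hB.succ_le m]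

lemma sub_le_two_mul (hB : IsBlockDecomposition D k c γ a b M τ) (m : ℕ) :
    τ (m + 2) - τ m ≤ 2 * blockLength D k c := by
  linarith [hB.succ_le m, hB.succ_le (m + 1)]

theorem sub_nearConst_le_infDist (hB : IsBlockDecomposition D k c γ a b M τ)
    (hX : IsGeodesicSpace X) (hD : 0 ≤ D) (hk : 1 ≤ k) (hc : 0 ≤ c)
    (hγ : IsLocalSCQuasiGeodesic L D k c γ I) (hI : I.OrdConnected)
    (hL : 2 * blockLength D k c ≤ L) (ha : a ∈ I) (hb : b ∈ I) {x : X} {σ : ℝ}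
    (hσ : σ ≤ nearConst D k c) (hnear : ∀ v ∈ Icc a b, dist x (γ a) - σ ≤ dist x (γ v))
    {j : ℕ} (hj : j < M) :
    dist x (γ (τ j)) - nearConst D k c ≤ infDist x (γ '' Icc (τ j) (τ (j + 2))) := by
  have hτI : ∀ m, τ m ∈ I := fun m => hI.out ha hb (hB.mem m)
  have hne : ∀ m, (γ '' Icc (τ m) (τ (m + 2))).Nonempty :=
    fun m => ⟨_, mem_image_of_mem γ ⟨le_rfl, (hB.le_succ m).trans (hB.le_succ (m + 1))⟩⟩
  induction j with
  | zero =>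
    refine (le_infDist (hne 0)).2 ?_
    rintro _ ⟨q, hq, rfl⟩
    have := hnear q ⟨hB.zero ▸ hq.1, hq.2.trans (hB.mem 2).2⟩
    rw [hB.zero]; linarith
  | succ j ih =>
    have pass : ∀ v ∈ Icc (τ (j + 1)) (τ (j + 2)),
        dist x (γ (τ (j + 1))) + dist (γ (τ (j + 1))) (γ v) ≤
          dist x (γ v) + passConst D k c :=
      fun v hv => hγ.dist_add_dist_le_add_passConst hX hD hk hc hI (hτI j) (hτI (j + 2))
        (hB.add_le_succ j (by omega)) (hB.le_succ (j + 1)) ((hB.sub_le_two_mul j).trans hL)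
        (ih (by omega)) hv
    have hp := passConst_nonneg hD hk hc
    refine (le_infDist (hne (j + 1))).2 ?_
    rintro _ ⟨q, hq, rfl⟩
    rcases le_total q (τ (j + 2)) with hq2 | hq2
    · have := pass q ⟨hq.1, hq2⟩
      unfold nearConst; linarith [dist_nonneg (x := γ (τ (j + 1))) (y := γ q)]
    · have := pass _ ⟨hB.le_succ (j + 1), le_rfl⟩
      have := hB.dist_le (j + 2) q ⟨hq2, hq.2⟩
      have : blockRadius D k c - c - 1 ≤ dist (γ (τ (j + 1))) (γ (τ (j + 2))) :=
        hB.le_dist (j + 1) hj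
      have := dist_triangle x (γ q) (γ (τ (j + 2)))
      rw [dist_comm (γ q)] at this
      unfold nearConst; linarith

theorem dist_add_dist_le_add_passConst (hB : IsBlockDecomposition D k c γ a b M τ)
    (hX : IsGeodesicSpace X) (hD : 0 ≤ D) (hk : 1 ≤ k) (hc : 0 ≤ c)
    (hγ : IsLocalSCQuasiGeodesic L D k c γ I) (hI : I.OrdConnected)
    (hL : 2 * blockLength D k c ≤ L) (ha : a ∈ I) (hb : b ∈ I) {x : X} {σ : ℝ}
    (hσ : σ ≤ nearConst D k c) (hnear : ∀ v ∈ Icc a b, dist x (γ a) - σ ≤ dist x (γ v))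
    {j : ℕ} (hj : j < M) {v : ℝ} (hv : v ∈ Icc (τ (j + 1)) (τ (j + 2))) :
    dist x (γ (τ (j + 1))) + dist (γ (τ (j + 1))) (γ v) ≤ dist x (γ v) + passConst D k c :=
  hγ.dist_add_dist_le_add_passConst hX hD hk hc hI (hI.out ha hb (hB.mem j))
    (hI.out ha hb (hB.mem (j + 2))) (hB.add_le_succ j hj) (hB.le_succ (j + 1))
    ((hB.sub_le_two_mul j).trans hL)
    (hB.sub_nearConst_le_infDist hX hD hk hc hγ hI hL ha hb hσ hnear hj) hv

theorem sub_add_mul_blockGain_le (hB : IsBlockDecomposition D k c γ a b M τ)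
    (hX : IsGeodesicSpace X) (hD : 0 ≤ D) (hk : 1 ≤ k) (hc : 0 ≤ c)
    (hγ : IsLocalSCQuasiGeodesic L D k c γ I) (hI : I.OrdConnected)
    (hL : 2 * blockLength D k c ≤ L) (ha : a ∈ I) (hb : b ∈ I) {x : X} {σ : ℝ}
    (hσ : σ ≤ nearConst D k c) (hnear : ∀ v ∈ Icc a b, dist x (γ a) - σ ≤ dist x (γ v))
    {j : ℕ} (hj : j < M) :
    dist x (γ a) - σ + j * blockGain D k c ≤ dist x (γ (τ (j + 1))) := by
  induction j with
  | zero => simpa using hnear (τ 1) (hB.mem 1)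
  | succ j ih =>
    have := hB.dist_add_dist_le_add_passConst hX hD hk hc hγ hI hL ha hb hσ hnear
      (j := j) (by omega) ⟨hB.le_succ (j + 1), le_rfl⟩
    have := hB.le_dist (j + 1) hj
    have := ih (by omega)
    have : blockGain D k c = blockRadius D k c - c - 1 - passConst D k c := rfl
    push_cast; linarith

end IsBlockDecomposition

namespace IsLocalSCQuasiGeodesic

variable {X : Type u} [MetricSpace X] {L D k c : ℝ} {γ : ℝ → X} {I : Set ℝ}

theorem sub_add_mul_blockGain_le_dist (hX : IsGeodesicSpace X) (hD : 0 ≤ D) (hk : 1 ≤ k)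
    (hc : 0 ≤ c) (hγ : IsLocalSCQuasiGeodesic L D k c γ I) (hI : I.OrdConnected)
    (hL : 2 * blockLength D k c ≤ L) {a b : ℝ} (ha : a ∈ I) (hb : b ∈ I) (hab : a ≤ b)
    {x : X} {σ : ℝ} (hσ : σ ≤ nearConst D k c)
    (hnear : ∀ v ∈ Icc a b, dist x (γ a) - σ ≤ dist x (γ v)) :
    dist x (γ a) - σ + ((b - a) / blockLength D k c - 2) * blockGain D k c
      - passConst D k c ≤ dist x (γ b) := by
  have hG := one_le_blockLength hD hk hc
  have hgain := passConst_add_le_blockGain hD hk hc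
  have hp := passConst_nonneg hD hk hc
  obtain ⟨M, τ, hB⟩ := hγ.exists_isBlockDecomposition hD hk hc hI (by linarith) ha hb hab
  have hba : (b - a) / blockLength D k c ≤ M + 1 := by
    rw [div_le_iff₀ (by linarith)]
    have := hB.le_add_mul (M + 1)
    rw [hB.last] at this; push_cast at this; linarith
  rcases M with _ | n
  · have : ((b - a) / blockLength D k c - 2) * blockGain D k c ≤ 0 :=
      mul_nonpos_of_nonpos_of_nonneg (by push_cast at hba; linarith) (by linarith)
    linarith [hnear b (right_mem_Icc.2 hab)]
  · have h1 := hB.dist_add_dist_le_add_passConst hX hD hk hc hγ hI hL ha hb hσ hnear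
      (j := n) (by omega) ⟨hB.le_succ (n + 1), le_rfl⟩
    have h2 := hB.sub_add_mul_blockGain_le hX hD hk hc hγ hI hL ha hb hσ hnear
      (j := n) (by omega)
    have : ((b - a) / blockLength D k c - 2) * blockGain D k c ≤ n * blockGain D k c :=
      mul_le_mul_of_nonneg_right (by push_cast at hba; linarith) (by linarith)
    rw [hB.last] at h1
    linarith [dist_nonneg (x := γ (τ (n + 1))) (y := γ b)]

theorem sub_le_of_forall_sub_le_dist (hX : IsGeodesicSpace X) (hD : 0 ≤ D) (hk : 1 ≤ k)
    (hc : 0 ≤ c) (hγ : IsLocalSCQuasiGeodesic L D k c γ I) (hI : I.OrdConnected)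
    (hL : 2 * blockLength D k c ≤ L) {a b : ℝ} (ha : a ∈ I) (hb : b ∈ I) (hab : a ≤ b)
    {x : X} {σ : ℝ} (hσ : σ ≤ 9)
    (hnear : ∀ v ∈ Icc a b, dist x (γ a) - σ ≤ dist x (γ v))
    (hfar : dist x (γ b) ≤ dist x (γ a) + σ) :
    b - a ≤ 3 * blockLength D k c := by
  have hG := one_le_blockLength hD hk hc
  have hgain := passConst_add_le_blockGain hD hk hc
  have hp := passConst_nonneg hD hk hc
  have := hγ.sub_add_mul_blockGain_le_dist hX hD hk hc hI hL ha hb hab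
    (by unfold nearConst; linarith) hnear
  by_contra! h
  have : 1 ≤ (b - a) / blockLength D k c - 2 := by
    rw [le_sub_iff_add_le, le_div_iff₀ (by linarith)]; linarith
  nlinarith

end IsLocalSCQuasiGeodesic

lemma IsGeodesicSpace.exists_dist_le_and_dist_le_max {X : Type u} [MetricSpace X]
    (hX : IsGeodesicSpace X) (o x : X) {δ : ℝ} (hδ : 0 ≤ δ) :
    ∃ z, dist z x ≤ δ ∧ dist o z ≤ max 0 (dist o x - δ) := by
  by_cases h : dist o x ≤ δ
  · exact ⟨o, h, by simp⟩
  · obtain ⟨z, hoz, hzx⟩ :=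
      hX.exists_dist_eq o x (ρ := dist o x - δ) (by linarith) (by linarith)
    exact ⟨z, by linarith, hoz.le.trans (le_max_right _ _)⟩

lemma exists_mem_coarseProj_image {X : Type u} [MetricSpace X] {γ : ℝ → X} {I : Set ℝ}
    (hI : I.Nonempty) (x : X) : ∃ v ∈ I, γ v ∈ coarseProj (γ '' I) x := by
  obtain ⟨_, hy⟩ := coarseProj_nonempty (hI.image γ) x
  obtain ⟨v, hv, rfl⟩ := hy.1
  exact ⟨v, hv, hy⟩

namespace IsLocalSCQuasiGeodesic

variable {X : Type u} [MetricSpace X] {L D k c : ℝ} {γ : ℝ → X} {I : Set ℝ}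

lemma abs_sub_le_mul_of_abs_sub_le (hγ : IsLocalSCQuasiGeodesic L D k c γ I)
    (hI : I.OrdConnected) (hk : 0 < k) {u u' : ℝ} (hu : u ∈ I) (hu' : u' ∈ I) (huu : |u - u'| ≤ L) :
    |u - u'| ≤ k * (dist (γ u) (γ u') + c) := by
  wlog h : u ≤ u' generalizing u u'
  · rw [abs_sub_comm, dist_comm]; exact this hu' hu (by rwa [abs_sub_comm]) (le_of_not_ge h)
  rw [abs_sub_comm, abs_of_nonneg (by linarith)] at huu
  exact (hγ.quasiGeodesicOn_Icc hI hu hu' h huu).abs_sub_le hk (left_mem_Icc.2 h)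
    (right_mem_Icc.2 h)

theorem dist_le_of_abs_sub_le (hγ : IsLocalSCQuasiGeodesic L D k c γ I) (hI : I.OrdConnected)
    {o : X} {r : ℝ} (hdisj : Disjoint (closedBall o r) (γ '' I)) {z z' : X}
    (hz : z ∈ closedBall o r) (hz' : z' ∈ closedBall o r) {u u' : ℝ} (hu : u ∈ I)
    (hu' : u' ∈ I) (hy : γ u ∈ coarseProj (γ '' I) z) (hy' : γ u' ∈ coarseProj (γ '' I) z')
    (huu : |u - u'| ≤ L) : dist (γ u) (γ u') ≤ D := by
  wlog h : u ≤ u' generalizing z z' u u'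
  · rw [dist_comm]; exact this hz' hz hu' hu hy' hy (by rwa [abs_sub_comm]) (le_of_not_ge h)
  have hW : γ '' Icc u u' ⊆ γ '' I := image_mono (hI.out hu hu')
  exact hγ.stronglyContracting_Icc hI hu hu' h
    (by rwa [abs_sub_comm, abs_of_nonneg (by linarith)] at huu) o r (hdisj.mono_right hW)
    z hz z' hz' _ (mem_coarseProj_of_subset hW hy (mem_image_of_mem γ (left_mem_Icc.2 h)))
    _ (mem_coarseProj_of_subset hW hy' (mem_image_of_mem γ (right_mem_Icc.2 h)))

theorem abs_sub_le_of_disjoint_closedBall (hγ : IsLocalSCQuasiGeodesic L D k c γ I)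
    (hI : I.OrdConnected) (hk : 0 < k) {o : X} {r : ℝ}
    (hdisj : Disjoint (closedBall o r) (γ '' I)) {z z' : X} (hz : z ∈ closedBall o r)
    (hz' : z' ∈ closedBall o r) {u u' : ℝ} (hu : u ∈ I) (hu' : u' ∈ I)
    (hy : γ u ∈ coarseProj (γ '' I) z) (hy' : γ u' ∈ coarseProj (γ '' I) z')
    (huu : |u - u'| ≤ L) : |u - u'| ≤ k * (D + c) :=
  (hγ.abs_sub_le_mul_of_abs_sub_le hI hk hu hu' huu).trans <| mul_le_mul_of_nonneg_left
    (by linarith [hγ.dist_le_of_abs_sub_le hI hdisj hz hz' hu hu' hy hy' huu]) hk.le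

theorem abs_sub_le_of_dist_le_four (hX : IsGeodesicSpace X) (hD : 0 ≤ D) (hk : 1 ≤ k)
    (hc : 0 ≤ c) (hγ : IsLocalSCQuasiGeodesic L D k c γ I) (hI : I.OrdConnected)
    (hL : 2 * blockLength D k c ≤ L) {z z' : X} (hzz : dist z z' ≤ 4) {u u' : ℝ}
    (hu : u ∈ I) (hu' : u' ∈ I) (hy : γ u ∈ coarseProj (γ '' I) z)
    (hy' : γ u' ∈ coarseProj (γ '' I) z') :
    |u - u'| ≤ 3 * blockLength D k c := by
  wlog h : u ≤ u' generalizing z z' u u'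
  · rw [abs_sub_comm]; exact this (by rwa [dist_comm]) hu' hu hy' hy (le_of_not_ge h)
  rw [abs_sub_comm, abs_of_nonneg (by linarith)]
  have hzu := infDist_le_dist_of_mem (x := z) hy.1
  refine hγ.sub_le_of_forall_sub_le_dist hX hD hk hc hI hL hu hu' h (x := z) (σ := 9)
    le_rfl (fun v hv => ?_) ?_
  · have := infDist_le_dist_of_mem (x := z) (mem_image_of_mem γ (hI.out hu hu' hv))
    linarith [hy.2]
  · have : infDist z' (γ '' I) ≤ infDist z (γ '' I) + dist z' z := infDist_le_infDist_add_dist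
    rw [dist_comm z' z] at this
    linarith [dist_triangle z z' (γ u'), hy'.2]

/-- Bisect the segment `[z, z']`; the two halves give parameters at most `2 dyadicConst`
apart, which a single window then contracts back to `k (D + c)`. -/
theorem abs_sub_le_dyadicConst (hX : IsGeodesicSpace X) (hD : 0 ≤ D) (hk : 1 ≤ k) (hc : 0 ≤ c)
    (hγ : IsLocalSCQuasiGeodesic L D k c γ I) (hI : I.OrdConnected)
    (hL : 2 * dyadicConst D k c ≤ L) {z z' : X}
    (hzz : dist z z' ≤ max 4 (infDist z (γ '' I) - 4)) {u u' : ℝ} (hu : u ∈ I)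
    (hu' : u' ∈ I) (hy : γ u ∈ coarseProj (γ '' I) z) (hy' : γ u' ∈ coarseProj (γ '' I) z') :
    |u - u'| ≤ dyadicConst D k c := by
  have hG := one_le_blockLength hD hk hc
  have hkDc : 0 ≤ k * (D + c) := mul_nonneg (by linarith) (by linarith)
  have hG2 : 2 * blockLength D k c ≤ L := by unfold dyadicConst at hL; linarith
  have hG3 : 3 * blockLength D k c ≤ dyadicConst D k c := by unfold dyadicConst; linarith
  obtain ⟨n, hn⟩ : ∃ n : ℕ, dist z z' ≤ 4 * 2 ^ n := by
    obtain ⟨n, hn⟩ := pow_unbounded_of_one_lt (dist z z') one_lt_two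
    exact ⟨n, by linarith [pow_pos (two_pos (α := ℝ)) n]⟩
  induction n generalizing z z' u u' with
  | zero =>
    exact (hγ.abs_sub_le_of_dist_le_four hX hD hk hc hI hG2 (by simpa using hn) hu hu' hy
      hy').trans hG3
  | succ n ih =>
    by_cases h4 : dist z z' ≤ 4
    · exact (hγ.abs_sub_le_of_dist_le_four hX hD hk hc hI hG2 h4 hu hu' hy hy').trans hG3
    have hfar : dist z z' + 4 ≤ infDist z (γ '' I) := by
      rcases le_max_iff.1 hzz with h | h <;> linarith
    obtain ⟨m, hzm, hmz'⟩ := hX.exists_dist_eq z z' (ρ := dist z z' / 2) (by positivity)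
      (by linarith [dist_nonneg (x := z) (y := z')])
    obtain ⟨w, hw, hym⟩ := exists_mem_coarseProj_image ⟨u, hu⟩ (γ := γ) m
    have hm : infDist z (γ '' I) ≤ infDist m (γ '' I) + dist z m := infDist_le_infDist_add_dist
    have hhalf : dist z z' / 2 ≤ 4 * 2 ^ n := by rw [pow_succ] at hn; linarith
    have h1 := ih (z := z) (z' := m) (le_max_of_le_right (by linarith)) hu hw hy hym
      (by linarith)
    have h2 := ih (z := m) (z' := z') (le_max_of_le_right (by linarith)) hw hu' hym hy'
      (by linarith)
    have huu : |u - u'| ≤ L := by linarith [_root_.abs_sub_le u w u']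
    have hdisj := disjoint_closedBall_of_lt_infDist (x := z) (s := γ '' I)
      (r := infDist z (γ '' I) - 1) (by linarith)
    have := hγ.abs_sub_le_of_disjoint_closedBall hI (by linarith) hdisj
      (mem_closedBall_self (by linarith)) (mem_closedBall'.2 (by linarith)) hu hu' hy hy' huu
    unfold dyadicConst; linarith

/-- Project the two points and the centre of the ball; the points are first moved by at
most `4` towards the centre so that the bisection estimate applies. -/
theorem isStronglyContracting_image (hX : IsGeodesicSpace X) (hD : 0 ≤ D) (hk : 1 ≤ k)
    (hc : 0 ≤ c) (hγ : IsLocalSCQuasiGeodesic L D k c γ I) (hI : I.OrdConnected)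
    (hL : localScale D k c ≤ L) : IsStronglyContracting D (γ '' I) := by
  intro o r hdisj x₁ hx₁ x₂ hx₂ y₁ hy₁ y₂ hy₂
  obtain ⟨u₁, hu₁, rfl⟩ := hy₁.1
  obtain ⟨u₂, hu₂, rfl⟩ := hy₂.1
  have hP2 := (two_mul_dyadicConst_le_localScale hD hk hc).trans hL
  have hG2 := (two_mul_blockLength_le_localScale hD hk hc).trans hL
  have hr : r ≤ infDist o (γ '' I) :=
    (le_infDist ⟨_, mem_image_of_mem γ hu₁⟩).2 fun w hw =>
      le_of_lt (not_le.1 fun h => disjoint_left.1 hdisj (mem_closedBall'.2 h) hw)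
  obtain ⟨v, hv, hyv⟩ := exists_mem_coarseProj_image ⟨u₁, hu₁⟩ (γ := γ) o
  have near : ∀ {x u}, x ∈ closedBall o r → u ∈ I → γ u ∈ coarseProj (γ '' I) x →
      |v - u| ≤ dyadicConst D k c + 3 * blockLength D k c := by
    intro x u hx hu hy
    obtain ⟨z, hzx, hoz⟩ := hX.exists_dist_le_and_dist_le_max o x (δ := 4) (by norm_num)
    obtain ⟨w, hw, hyw⟩ := exists_mem_coarseProj_image ⟨u, hu⟩ (γ := γ) z
    have h1 := hγ.abs_sub_le_dyadicConst hX hD hk hc hI hP2 (z := o) (z' := z)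
      (hoz.trans (max_le_max (by norm_num) (by linarith [mem_closedBall'.1 hx]))) hv hw hyv hyw
    have h2 := hγ.abs_sub_le_of_dist_le_four hX hD hk hc hI hG2 hzx hw hu hyw hy
    linarith [_root_.abs_sub_le v w u]
  have huu : |u₁ - u₂| ≤ L := by
    have := near hx₁ hu₁ hy₁
    have := near hx₂ hu₂ hy₂
    have := _root_.abs_sub_le u₁ v u₂
    rw [abs_sub_comm u₁ v] at this
    unfold localScale at hL; linarith
  exact hγ.dist_le_of_abs_sub_le hI hdisj hx₁ hx₂ hu₁ hu₂ hy₁ hy₂ huu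

theorem dist_le_add_mul_add (hγ : IsLocalSCQuasiGeodesic L D k c γ I) (hI : I.OrdConnected)
    (hc : 0 ≤ c) (hL : 1 ≤ L) {s t : ℝ} (hs : s ∈ I) (ht : t ∈ I) (hst : s ≤ t) :
    dist (γ s) (γ t) ≤ (k + c) * (t - s) + c := by
  obtain ⟨n, hn⟩ := exists_nat_ge (t - s)
  induction n generalizing s with
  | zero => 
    have : t = s := by push_cast at hn; linarith
    subst this; simp [hc]
  | succ n ih =>
    by_cases h1 : t - s ≤ 1
    · have := hγ.dist_le hI hs ht hst (by linarith)
      nlinarith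
    have hs1 : s + 1 ∈ I := hI.out hs ht ⟨by linarith, by linarith⟩
    have := hγ.dist_le hI hs hs1 (by linarith) (by linarith)
    have := ih hs1 (by linarith) (by push_cast at hn; linarith)
    nlinarith [dist_triangle (γ s) (γ (s + 1)) (γ t)]

theorem isQuasiGeodesicOn (hX : IsGeodesicSpace X) (hD : 0 ≤ D) (hk : 1 ≤ k) (hc : 0 ≤ c)
    (hγ : IsLocalSCQuasiGeodesic L D k c γ I) (hI : I.OrdConnected)
    (hL : 2 * blockLength D k c ≤ L) : IsQuasiGeodesicOn (globalK k c) (globalC D k c) γ I := by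
  have hG := one_le_blockLength hD hk hc
  have hgain := passConst_add_le_blockGain hD hk hc
  have hp := passConst_nonneg hD hk hc
  have hK : 0 < globalK k c := by unfold globalK; linarith
  refine IsQuasiGeodesicOn.of_le fun s hs t ht hst => ⟨?_, ?_⟩
  · have hσ : (0 : ℝ) ≤ nearConst D k c := by unfold nearConst; linarith
    have hgrow := hγ.sub_add_mul_blockGain_le_dist hX hD hk hc hI hL hs ht hst (x := γ s) hσ
      (fun v _ => by simp)
    rw [dist_self, sub_zero, zero_add] at hgrow
    have hKG : 1 / globalK k c ≤ blockGain D k c / blockLength D k c := by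
      rw [div_le_div_iff₀ hK (by linarith)]
      linarith [blockLength_le_globalK_mul hD hk hc]
    have : (1 / globalK k c) * (t - s) ≤ (t - s) / blockLength D k c * blockGain D k c :=
      calc (1 / globalK k c) * (t - s)
          ≤ blockGain D k c / blockLength D k c * (t - s) :=
            mul_le_mul_of_nonneg_right hKG (sub_nonneg.2 hst)
        _ = (t - s) / blockLength D k c * blockGain D k c := by ring
    unfold globalC; linarith
  · have := hγ.dist_le_add_mul_add hI hc (by linarith) hs ht hst
    have : (k + c) * (t - s) ≤ globalK k c * (t - s) :=
      mul_le_mul_of_nonneg_right (by unfold globalK; linarith) (by linarith)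
    have : c ≤ globalC D k c := by unfold globalC; linarith
    linarith

end IsLocalSCQuasiGeodesic

/-- Local-to-global for strong contraction: for all `D ≥ 0`, `k ≥ 1`, `c ≥ 0` there
are `L`, `k'`, `c'` depending only on `D, k, c` such that every
`(L; D; k, c)`-local strongly contracting quasi-geodesic in a geodesic metric space
is a `(k', c')`-quasi-geodesic whose image is `D`-strongly contracting. -/
theorem local_strongly_contracting_to_global (D k c : ℝ)
    (hD : 0 ≤ D) (hk : 1 ≤ k) (hc : 0 ≤ c) :
    ∃ L k' c' : ℝ, 1 ≤ k' ∧ 0 ≤ c' ∧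
      ∀ (X : Type u) [MetricSpace X], IsGeodesicSpace X →
        ∀ (I : Set ℝ) (γ : ℝ → X), I.OrdConnected →
          IsLocalSCQuasiGeodesic L D k c γ I →
          IsQuasiGeodesicOn k' c' γ I ∧ IsStronglyContracting D (γ '' I) := by
  have hgain := passConst_add_le_blockGain hD hk hc
  have hp := passConst_nonneg hD hk hc
  refine ⟨localScale D k c, globalK k c, globalC D k c, by unfold globalK; linarith,
    by unfold globalC; linarith, fun X _ hX I γ hI hγ => ⟨?_, ?_⟩⟩
  · exact hγ.isQuasiGeodesicOn hX hD hk hc hI (two_mul_blockLength_le_localScale hD hk hc)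
  · exact hγ.isStronglyContracting_image hX hD hk hc hI le_rfl
end

section
/- For all k ≥ 1, c ≥ 0, D ≥ 0 there exists D' with the following property. Let γ be a D-strongly contracting (k,c)-quasi-geodesic in a geodesic metric space X which is the concatenation γ_1 * γ_2 of two D-strongly contracting (k,c)-quasi-geodesics, with concatenation point p. If x ∈ X is such that some point of π_{γ_1}(x) is at distance at least D' from p, then every point of π_{γ_2}(x) is within distance D' of p. -/
universe u

/- Auxiliary lemmas for the proof of bounded_jumps. -/
section Aux

variable {X : Type u} [MetricSpace X]

lemma exists_coarseProj {Y : Set X} (hY : Y.Nonempty) (x : X) :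
    ∃ z, z ∈ coarseProj Y x := by
  obtain ⟨z, hz, hlt⟩ := (Metric.infDist_lt_iff hY).1
    (show Metric.infDist x Y < Metric.infDist x Y + 1 by linarith)
  exact ⟨z, hz, hlt.le⟩

lemma bstar_aux (hX : IsGeodesicSpace X) {D : ℝ} (hD : 0 ≤ D)
    {Y : Set X} (hYne : Y.Nonempty) (hY : IsStronglyContracting D Y) :
    ∀ n : ℕ, ∀ u v z : X, v ∈ Y → z ∈ coarseProj Y u → dist u v ≤ n →
      dist z v ≤ dist u v - Metric.infDist u Y
        + min (Metric.infDist u Y) (D + 2) + (D + 7) := by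
  have base : ∀ u v z : X, v ∈ Y → z ∈ coarseProj Y u →
      Metric.infDist u Y < D + 4 →
      dist z v ≤ dist u v - Metric.infDist u Y
        + min (Metric.infDist u Y) (D + 2) + (D + 7) := by
    intro u v z _ hz hsmall
    have h1 : dist u z ≤ Metric.infDist u Y + 1 := hz.2
    have h2 : dist z v ≤ dist z u + dist u v := dist_triangle z u v
    rw [dist_comm z u] at h2
    rcases le_total (Metric.infDist u Y) (D + 2) with h' | h'
    · rw [min_eq_left h']; linarith
    · rw [min_eq_right h']; linarith
  intro n
  induction n with
  | zero =>
    intro u v z hv hz hT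
    have hI : Metric.infDist u Y ≤ dist u v := Metric.infDist_le_dist_of_mem hv
    exact base u v z hv hz (by push_cast at hT; linarith)
  | succ n ih =>
    intro u v z hv hz hT
    by_cases hsmall : Metric.infDist u Y < D + 4
    · exact base u v z hv hz hsmall
    push_neg at hsmall
    set I := Metric.infDist u Y with hIdef
    have hIT : I ≤ dist u v := Metric.infDist_le_dist_of_mem hv
    set T := dist u v with hTdef
    obtain ⟨σ, hσ0, hσT, hσd⟩ := hX u v
    have hT0 : (0:ℝ) ≤ T := dist_nonneg
    set s₀ := I - 2 with hs₀def
    have hs₀mem : s₀ ∈ Set.Icc (0:ℝ) T := ⟨by linarith, by linarith⟩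
    set u' := σ s₀ with hu'def
    have hduu' : dist u u' = s₀ := by
      have := hσd 0 ⟨le_rfl, hT0⟩ s₀ hs₀mem
      rw [hσ0] at this
      rw [this, abs_of_nonpos (by linarith : (0:ℝ) - s₀ ≤ 0)]
      ring
    have hdu'v : dist u' v = T - s₀ := by
      have := hσd s₀ hs₀mem T ⟨hT0, le_rfl⟩
      rw [hσT] at this
      rw [this, abs_of_nonpos (by linarith : s₀ - T ≤ 0)]
      ring
    have hIu' : I - s₀ ≤ Metric.infDist u' Y := by
      have h := Metric.infDist_le_infDist_add_dist (x := u) (y := u') (s := Y)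
      rw [hduu'] at h
      exact by simpa [← hIdef] using (by linarith : I - s₀ ≤ Metric.infDist u' Y)
    obtain ⟨z', hz'⟩ := exists_coarseProj hYne u'
    have hdisj : Disjoint (Metric.closedBall u s₀) Y := by
      rw [Set.disjoint_left]
      intro w hw hwY
      have h1 : dist u w ≤ s₀ := by
        rw [Metric.mem_closedBall] at hw; rwa [dist_comm]
      have h2 : I ≤ dist u w := Metric.infDist_le_dist_of_mem hwY
      linarith
    have hzz' : dist z z' ≤ D := by
      refine hY u s₀ hdisj u ?_ u' ?_ z hz z' hz'
      · simp [Metric.mem_closedBall]; linarith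
      · rw [Metric.mem_closedBall, dist_comm]; rw [hduu']
    have hT' : dist u' v ≤ (n:ℝ) := by
      push_cast at hT
      rw [hdu'v]; linarith
    have hIH := ih u' v z' hv hz' hT'
    have hminle : min (Metric.infDist u' Y) (D + 2) ≤ Metric.infDist u' Y :=
      min_le_left _ _
    have htr : dist z v ≤ dist z z' + dist z' v := dist_triangle z z' v
    have hmin : min I (D + 2) = D + 2 := min_eq_right (by linarith)
    rw [hmin]
    rw [hdu'v] at hIH
    linarith

end Aux

section Aux2

variable {X : Type u} [MetricSpace X]

lemma bstar (hX : IsGeodesicSpace X) {D : ℝ} (hD : 0 ≤ D)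
    {Y : Set X} (hYne : Y.Nonempty) (hY : IsStronglyContracting D Y)
    {u v z : X} (hv : v ∈ Y) (hz : z ∈ coarseProj Y u) :
    dist z v ≤ dist u v - Metric.infDist u Y + (2 * D + 9) := by
  have h := bstar_aux hX hD hYne hY ⌈dist u v⌉₊ u v z hv hz (Nat.le_ceil _)
  have h2 : min (Metric.infDist u Y) (D + 2) ≤ D + 2 := min_le_right _ _
  linarith

lemma aform (hX : IsGeodesicSpace X) {D : ℝ} (hD : 0 ≤ D)
    {Y : Set X} (hYne : Y.Nonempty) (hY : IsStronglyContracting D Y)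
    {u v z : X} (hv : v ∈ Y) (hz : z ∈ coarseProj Y u) :
    dist u z + dist z v ≤ dist u v + (2 * D + 10) := by
  have h := bstar hX hD hYne hY hv hz
  have h1 : dist u z ≤ Metric.infDist u Y + 1 := hz.2
  linarith

lemma geod_close (hX : IsGeodesicSpace X) {D : ℝ} (hD : 0 ≤ D)
    {Y : Set X} (hYne : Y.Nonempty) (hY : IsStronglyContracting D Y)
    {u v : X} (hu : u ∈ Y) (hv : v ∈ Y) {σ : ℝ → X}
    (hσ : IsGeodesicSegment σ u v) {t : ℝ} (ht : t ∈ Set.Icc 0 (dist u v)) :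
    Metric.infDist (σ t) Y ≤ 2 * D + 9 := by
  obtain ⟨hσ0, hσT, hσd⟩ := hσ
  obtain ⟨z, hz⟩ := exists_coarseProj hYne (σ t)
  have hT0 : (0:ℝ) ≤ dist u v := dist_nonneg
  have h1 : dist (σ t) u = t := by
    have := hσd t ht 0 ⟨le_rfl, hT0⟩
    rw [hσ0] at this
    rw [this, abs_of_nonneg (by linarith [ht.1] : (0:ℝ) ≤ t - 0)]; ring
  have h2 : dist (σ t) v = dist u v - t := by
    have := hσd t ht (dist u v) ⟨hT0, le_rfl⟩
    rw [hσT] at this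
    rw [this, abs_of_nonpos (by linarith [ht.2] : t - dist u v ≤ 0)]; ring
  have b1 := bstar hX hD hYne hY hu hz
  have b2 := bstar hX hD hYne hY hv hz
  rw [h1] at b1
  rw [h2] at b2
  have htri : dist u v ≤ dist u z + dist z v := dist_triangle u z v
  rw [dist_comm u z] at htri
  linarith

end Aux2

section Aux3

variable {X : Type u} [MetricSpace X]

lemma additivity {k c D : ℝ} (hk : 1 ≤ k) (hc : 0 ≤ c) (hD : 0 ≤ D)
    (hX : IsGeodesicSpace X) {a m b : ℝ} {γ : ℝ → X} (ham : a ≤ m) (hmb : m ≤ b)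
    (hq : IsQuasiGeodesicOn k c γ (Set.Icc a b))
    (hsc : IsStronglyContracting D (γ '' Set.Icc a b)) :
    ∀ s ∈ Set.Icc a m, ∀ t ∈ Set.Icc m b,
      dist (γ s) (γ m) + dist (γ t) (γ m) ≤
        dist (γ s) (γ t) + 2 * ((2*D+9) + 1 + k^2*(2*(2*D+9)+2+c) + c) := by
  intro s hs t ht
  set E : ℝ := 2*D+9 with hEdef
  have hE0 : (0:ℝ) ≤ E := by simp [hEdef]; linarith
  have hk0 : (0:ℝ) < k := lt_of_lt_of_le one_pos hk
  set Y : Set X := γ '' Set.Icc a b with hYdef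
  set Y₁ : Set X := γ '' Set.Icc a m with hY1def
  set Y₂ : Set X := γ '' Set.Icc m b with hY2def
  have hmem_ab : ∀ r : ℝ, r ∈ Set.Icc a m → r ∈ Set.Icc a b :=
    fun r hr => ⟨hr.1, le_trans hr.2 hmb⟩
  have hmem_ab' : ∀ r : ℝ, r ∈ Set.Icc m b → r ∈ Set.Icc a b :=
    fun r hr => ⟨le_trans ham hr.1, hr.2⟩
  have hmY : m ∈ Set.Icc a b := ⟨ham, hmb⟩
  have hYne : Y.Nonempty := ⟨γ m, m, hmY, rfl⟩
  have hY1ne : Y₁.Nonempty := ⟨γ m, m, ⟨ham, le_rfl⟩, rfl⟩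
  have hY2ne : Y₂.Nonempty := ⟨γ m, m, ⟨le_rfl, hmb⟩, rfl⟩
  have huY : γ s ∈ Y := ⟨s, hmem_ab s hs, rfl⟩
  have hwY : γ t ∈ Y := ⟨t, hmem_ab' t ht, rfl⟩
  have huY1 : γ s ∈ Y₁ := ⟨s, hs, rfl⟩
  have hwY2 : γ t ∈ Y₂ := ⟨t, ht, rfl⟩
  set u := γ s with hudef
  set w := γ t with hwdef
  obtain ⟨σ, hσseg⟩ := hX u w
  have hσseg' := hσseg
  obtain ⟨hσ0, hσT, hσd⟩ := hσseg
  set T := dist u w with hTdef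
  have hT0 : (0:ℝ) ≤ T := dist_nonneg
  set S : Set ℝ := {r | r ∈ Set.Icc 0 T ∧ Metric.infDist (σ r) Y₁ ≤ E} with hSdef
  have h0S : (0:ℝ) ∈ S := by
    constructor
    · exact ⟨le_rfl, hT0⟩
    · rw [hσ0, Metric.infDist_zero_of_mem huY1]; exact hE0
  have hbdd : BddAbove S := ⟨T, fun r hr => hr.1.2⟩
  set t₀ := sSup S with ht₀def
  have ht₀0 : 0 ≤ t₀ := le_csSup hbdd h0S
  have ht₀T : t₀ ≤ T := csSup_le ⟨0, h0S⟩ (fun r hr => hr.1.2)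
  have ht₀mem : t₀ ∈ Set.Icc (0:ℝ) T := ⟨ht₀0, ht₀T⟩
  set q := σ t₀ with hqdef
  have hlip : ∀ r ∈ Set.Icc (0:ℝ) T, dist q (σ r) = |t₀ - r| := fun r hr =>
    hσd t₀ ht₀mem r hr
  -- q is close to Y₁
  have hq1 : Metric.infDist q Y₁ ≤ E := by
    refine le_of_forall_pos_le_add ?_
    intro ε hε
    obtain ⟨r, hrS, hrlt⟩ := exists_lt_of_lt_csSup ⟨0, h0S⟩
      (show t₀ - ε < sSup S by rw [← ht₀def]; linarith)
    have hrle : r ≤ t₀ := le_csSup hbdd hrS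
    have hd : dist q (σ r) ≤ ε := by
      rw [hlip r hrS.1, abs_of_nonneg (by linarith)]; linarith
    calc Metric.infDist q Y₁ ≤ Metric.infDist (σ r) Y₁ + dist q (σ r) :=
          Metric.infDist_le_infDist_add_dist
      _ ≤ E + ε := add_le_add hrS.2 hd
  -- q is close to Y₂
  have hq2 : Metric.infDist q Y₂ ≤ E := by
    rcases eq_or_lt_of_le ht₀T with heq | hlt
    · have : q = w := by rw [hqdef, heq, hTdef, hσT]
      rw [this, Metric.infDist_zero_of_mem hwY2]; exact hE0
    · refine le_of_forall_pos_le_add ?_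
      intro ε hε
      set ε' := min ε (T - t₀) with hε'def
      have hε'0 : 0 < ε' := lt_min hε (by linarith)
      have hε'le : ε' ≤ T - t₀ := min_le_right _ _
      set r := t₀ + ε' with hrdef
      have hrmem : r ∈ Set.Icc (0:ℝ) T := ⟨by linarith, by linarith⟩
      have hrnotS : r ∉ S := by
        intro hrS
        have := le_csSup hbdd hrS
        rw [← ht₀def] at this
        linarith
      have hfar1 : E < Metric.infDist (σ r) Y₁ := by
        by_contra h
        push_neg at h
        exact hrnotS ⟨hrmem, h⟩
      have hcloseY : Metric.infDist (σ r) Y ≤ E := by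
        have := geod_close hX hD hYne hsc huY hwY hσseg' hrmem
        simpa [hEdef] using this
      have hclose2 : Metric.infDist (σ r) Y₂ ≤ E := by
        by_contra h2
        push_neg at h2
        have hlt2 : Metric.infDist (σ r) Y
            < min (Metric.infDist (σ r) Y₁) (Metric.infDist (σ r) Y₂) :=
          lt_of_le_of_lt hcloseY (lt_min hfar1 h2)
        obtain ⟨y, hy, hylt⟩ := (Metric.infDist_lt_iff hYne).1 hlt2
        obtain ⟨ρ, hρ, rfl⟩ := hy
        rcases le_total ρ m with hρm | hρm
        · have : Metric.infDist (σ r) Y₁ ≤ dist (σ r) (γ ρ) :=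
            Metric.infDist_le_dist_of_mem ⟨ρ, ⟨hρ.1, hρm⟩, rfl⟩
          have := lt_of_le_of_lt this hylt
          simp only [lt_min_iff] at this
          exact lt_irrefl _ this.1
        · have : Metric.infDist (σ r) Y₂ ≤ dist (σ r) (γ ρ) :=
            Metric.infDist_le_dist_of_mem ⟨ρ, ⟨hρm, hρ.2⟩, rfl⟩
          have := lt_of_le_of_lt this hylt
          simp only [lt_min_iff] at this
          exact lt_irrefl _ this.2
      have hd : dist q (σ r) ≤ ε := by
        rw [hlip r hrmem, abs_of_nonpos (by linarith)]
        simp only [hrdef]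
        have : ε' ≤ ε := min_le_left _ _
        linarith
      calc Metric.infDist q Y₂ ≤ Metric.infDist (σ r) Y₂ + dist q (σ r) :=
            Metric.infDist_le_infDist_add_dist
        _ ≤ E + ε := add_le_add hclose2 hd
  -- extract nearby points on each piece
  obtain ⟨y1, hy1Y, hy1d⟩ := (Metric.infDist_lt_iff hY1ne).1
    (lt_of_le_of_lt hq1 (by linarith : E < E + 1))
  obtain ⟨y2, hy2Y, hy2d⟩ := (Metric.infDist_lt_iff hY2ne).1
    (lt_of_le_of_lt hq2 (by linarith : E < E + 1))
  obtain ⟨s', hs', rfl⟩ := hy1Y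
  obtain ⟨t', ht', rfl⟩ := hy2Y
  -- the crossing estimate: q is close to γ m
  have e1 : dist (γ s') (γ m) ≤ k * (m - s') + c := by
    have := (hq s' (hmem_ab s' hs') m hmY).2
    rwa [abs_of_nonpos (by linarith [hs'.2] : s' - m ≤ 0), neg_sub] at this
  have e3 : (1/k) * (t' - s') - c ≤ dist (γ s') (γ t') := by
    have := (hq s' (hmem_ab s' hs') t' (hmem_ab' t' ht')).1
    rwa [abs_of_nonpos (by linarith [hs'.2, ht'.1] : s' - t' ≤ 0), neg_sub] at this
  have e4 : dist (γ s') (γ t') ≤ 2 * E + 2 := by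
    have h1 := dist_triangle (γ s') q (γ t')
    rw [dist_comm (γ s') q] at h1
    linarith
  have hts' : t' - s' ≤ k * (2 * E + 2 + c) := by
    have h1 : (1/k) * (t' - s') ≤ 2 * E + 2 + c := by linarith
    have h2 := mul_le_mul_of_nonneg_left h1 (le_of_lt hk0)
    rw [show k * ((1/k) * (t' - s')) = (k / k) * (t' - s') by ring,
      div_self (ne_of_gt hk0), one_mul] at h2
    exact h2
  have hms' : m - s' ≤ t' - s' := by linarith [ht'.1]
  have hqp : dist q (γ m) ≤ E + 1 + k^2*(2*E+2+c) + c := by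
    have h1 := dist_triangle q (γ s') (γ m)
    have h2 : k * (m - s') ≤ k * (k * (2*E+2+c)) :=
      mul_le_mul_of_nonneg_left (le_trans hms' hts') (le_of_lt hk0)
    nlinarith [hy1d, e1]
  -- conclude
  have hsplit : dist u q + dist q w = T := by
    have h1 : dist u q = t₀ := by
      have := hσd 0 ⟨le_rfl, hT0⟩ t₀ ht₀mem
      rw [hσ0] at this
      rw [hqdef, this, abs_of_nonpos (by linarith : (0:ℝ) - t₀ ≤ 0)]; ring
    have h2 : dist q w = T - t₀ := by
      have h := hσd t₀ ht₀mem T ⟨hT0, le_rfl⟩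
      rw [hσT] at h
      rw [hqdef, h, abs_of_nonpos (by linarith : t₀ - T ≤ 0)]
      ring
    rw [h1, h2]; ring
  have ht1 : dist u (γ m) ≤ dist u q + dist q (γ m) := dist_triangle _ _ _
  have ht2 : dist w (γ m) ≤ dist w q + dist q (γ m) := dist_triangle _ _ _
  rw [dist_comm w q] at ht2
  have hfin : dist u (γ m) + dist w (γ m) ≤ T + 2 * dist q (γ m) := by
    linarith
  linarith

end Aux3

/-- Bounded jumps: if a `D`-strongly contracting `(k,c)`-quasi-geodesic `γ` on
`[a,b]` is the concatenation at `m` of two `D`-strongly contracting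
`(k,c)`-quasi-geodesics, and some projection of `x` to the first piece is at
distance at least `D'` from the concatenation point `γ m`, then every projection
of `x` to the second piece is within `D'` of `γ m`. -/
theorem bounded_jumps (k c D : ℝ) (hk : 1 ≤ k) (hc : 0 ≤ c) (hD : 0 ≤ D) :
    ∃ D' : ℝ, ∀ (X : Type u) [MetricSpace X], IsGeodesicSpace X →
      ∀ (a m b : ℝ) (γ : ℝ → X), a ≤ m → m ≤ b →
        IsQuasiGeodesicOn k c γ (Set.Icc a b) →
        IsStronglyContracting D (γ '' Set.Icc a b) →
        IsQuasiGeodesicOn k c γ (Set.Icc a m) →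
        IsStronglyContracting D (γ '' Set.Icc a m) →
        IsQuasiGeodesicOn k c γ (Set.Icc m b) →
        IsStronglyContracting D (γ '' Set.Icc m b) →
        ∀ x : X, (∃ y₁ ∈ coarseProj (γ '' Set.Icc a m) x, D' ≤ dist y₁ (γ m)) →
          ∀ y₂ ∈ coarseProj (γ '' Set.Icc m b) x, dist y₂ (γ m) ≤ D' := by
  refine ⟨(2*D+10) + ((2*D+9) + 1 + k^2*(2*(2*D+9)+2+c) + c) + 1, ?_⟩
  intro X _ hX a m b γ ham hmb hq hsc hqg1 hsc1 hqg2 hsc2 x hex y₂ hy₂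
  obtain ⟨y₁, hy₁mem, hy₁far⟩ := hex
  have hmY : m ∈ Set.Icc a b := ⟨ham, hmb⟩
  have hYne : (γ '' Set.Icc a b).Nonempty := ⟨γ m, m, hmY, rfl⟩
  have hY1ne : (γ '' Set.Icc a m).Nonempty := ⟨γ m, m, ⟨ham, le_rfl⟩, rfl⟩
  have hY2ne : (γ '' Set.Icc m b).Nonempty := ⟨γ m, m, ⟨le_rfl, hmb⟩, rfl⟩
  have hpY1 : γ m ∈ γ '' Set.Icc a m := ⟨m, ⟨ham, le_rfl⟩, rfl⟩
  have hpY2 : γ m ∈ γ '' Set.Icc m b := ⟨m, ⟨le_rfl, hmb⟩, rfl⟩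
  obtain ⟨z, hz⟩ := exists_coarseProj hYne x
  obtain ⟨τ, hτ, hτeq⟩ := hz.1
  obtain ⟨t₂, ht₂, ht₂eq⟩ := hy₂.1
  obtain ⟨s₁, hs₁, hs₁eq⟩ := hy₁mem.1
  have hadd := additivity hk hc hD hX ham hmb hq hsc
  have hy₂Y : y₂ ∈ γ '' Set.Icc a b := ⟨t₂, ⟨le_trans ham ht₂.1, ht₂.2⟩, ht₂eq⟩
  have hy₁Y : y₁ ∈ γ '' Set.Icc a b := ⟨s₁, ⟨hs₁.1, le_trans hs₁.2 hmb⟩, hs₁eq⟩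
  rcases le_total τ m with hτm | hτm
  · -- the global projection z lies on the first piece: bound dist y₂ (γ m)
    have hVII := aform hX hD hY2ne hsc2 hpY2 hy₂
    have hXX := aform hX hD hYne hsc hy₂Y hz
    have hIX := hadd τ ⟨hτ.1, hτm⟩ t₂ ht₂
    rw [hτeq, ht₂eq] at hIX
    have htri : dist x (γ m) ≤ dist x z + dist z (γ m) := dist_triangle _ _ _
    linarith
  · -- the global projection z lies on the second piece: contradicts y₁ being far
    exfalso
    have hVII := aform hX hD hY1ne hsc1 hpY1 hy₁mem
    have hXX := aform hX hD hYne hsc hy₁Y hz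
    have hIX := hadd s₁ hs₁ τ ⟨hτm, hτ.2⟩
    rw [hτeq, hs₁eq] at hIX
    have hcomm : dist z y₁ = dist y₁ z := dist_comm _ _
    have htri : dist x (γ m) ≤ dist x z + dist z (γ m) := dist_triangle _ _ _
    linarith
end

section
/- For all C ≥ 0 there exists D ≥ 0 with the following property. Let X be a geodesic metric space and let A ⊆ X be a C-strongly contracting subset satisfying Gromov's 4-point condition with constant C. Then any geodesic in the injective hull E(X) connecting two points of e(A) is contained in the D-neighborhood of e(A). -/
universe u

/-- The set of metric forms on `X`: functions with `d(x,y) ≤ f x + f y`. -/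
def metricForm (X : Type u) [MetricSpace X] : Set (X → ℝ) :=
  {f | ∀ x y, dist x y ≤ f x + f y}

/-- The injective hull `E(X)`: minimal metric forms (w.r.t. the pointwise order). -/
def injectiveHull (X : Type u) [MetricSpace X] : Set (X → ℝ) :=
  {f | f ∈ metricForm X ∧ ∀ g ∈ metricForm X, (∀ x, g x ≤ f x) → g = f}

namespace InjHull

variable {X : Type u} [MetricSpace X]

lemma form_nonneg {f : X → ℝ} (hf : f ∈ metricForm X) (x : X) : 0 ≤ f x := by
  have h := hf x x
  simp only [dist_self] at h
  linarith

lemma exists_near {f : X → ℝ} (hf : f ∈ injectiveHull X) (x : X) {ε : ℝ} (hε : 0 < ε) :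
    ∃ y, f x + f y ≤ dist x y + ε := by
  by_contra hcon
  push_neg at hcon
  classical
  set g : X → ℝ := fun z => if z = x then f x - ε / 2 else f z with hgdef
  have hgeq : g x = f x - ε / 2 := by simp [hgdef]
  have hgne : ∀ z, z ≠ x → g z = f z := by
    intro z hz
    simp [hgdef, hz]
  have hgm : g ∈ metricForm X := by
    intro y z
    by_cases hy : y = x
    · by_cases hz : z = x
      · rw [hy, hz, hgeq]
        have hk := hcon x
        simp only [dist_self] at hk ⊢
        linarith
      · rw [hy, hgeq, hgne z hz]
        have hk := hcon z
        linarith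
    · by_cases hz : z = x
      · rw [hz, hgne y hy, hgeq, dist_comm]
        have hk := hcon y
        linarith
      · rw [hgne y hy, hgne z hz]
        exact hf.1 y z
  have hle : ∀ z, g z ≤ f z := by
    intro z
    by_cases hz : z = x
    · rw [hz, hgeq]
      linarith
    · rw [hgne z hz]
  have heq := hf.2 g hgm hle
  have hx := congrFun heq x
  rw [hgeq] at hx
  linarith

lemma le_dist_add {f : X → ℝ} (hf : f ∈ injectiveHull X) (x y : X) :
    f x ≤ dist x y + f y := by
  by_contra hcon
  push_neg at hcon
  have hε : 0 < (f x - (dist x y + f y)) / 2 := by linarith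
  obtain ⟨z, hz⟩ := exists_near hf x hε
  have h1 := hf.1 y z
  have h2 := dist_triangle x y z
  linarith

lemma dist_bound {f g : X → ℝ} (hf : f ∈ injectiveHull X) (hg : g ∈ injectiveHull X)
    (x x₀ : X) : |f x - g x| ≤ f x₀ + g x₀ := by
  rw [abs_sub_le_iff]
  constructor
  · have h1 := le_dist_add hf x x₀
    have h2 := hg.1 x x₀
    linarith
  · have h1 := le_dist_add hg x x₀
    have h2 := hf.1 x x₀
    linarith

noncomputable def hullDist (f g : injectiveHull X) : ℝ :=
  sSup (Set.range fun x => |f.1 x - g.1 x|)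

lemma hullDist_bddAbove (f g : injectiveHull X) :
    BddAbove (Set.range fun x => |f.1 x - g.1 x|) := by
  rcases isEmpty_or_nonempty X with hX | hX
  · rw [Set.range_eq_empty]
    exact bddAbove_empty
  · obtain ⟨x₀⟩ := hX
    exact ⟨f.1 x₀ + g.1 x₀, by rintro r ⟨y, rfl⟩; exact dist_bound f.2 g.2 y x₀⟩

lemma le_hullDist (f g : injectiveHull X) (x : X) :
    |f.1 x - g.1 x| ≤ hullDist f g :=
  le_csSup (hullDist_bddAbove f g) ⟨x, rfl⟩

lemma hullDist_nonneg (f g : injectiveHull X) : 0 ≤ hullDist f g :=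
  Real.sSup_nonneg (by rintro r ⟨y, rfl⟩; exact abs_nonneg _)

lemma hullDist_self (f : injectiveHull X) : hullDist f f = 0 := by
  unfold hullDist
  rcases isEmpty_or_nonempty X with hX | hX
  · rw [Set.range_eq_empty, Real.sSup_empty]
  · have h : (Set.range fun x : X => |f.1 x - f.1 x|) = {0} := by
      simp [sub_self]
    rw [h, csSup_singleton]

lemma hullDist_comm (f g : injectiveHull X) : hullDist f g = hullDist g f := by
  unfold hullDist
  have h : (fun x : X => |f.1 x - g.1 x|) = fun x : X => |g.1 x - f.1 x| := by
    funext x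
    exact abs_sub_comm _ _
  rw [h]

lemma hullDist_triangle (f g h : injectiveHull X) :
    hullDist f h ≤ hullDist f g + hullDist g h := by
  apply Real.sSup_le
  · rintro r ⟨x, rfl⟩
    calc |f.1 x - h.1 x| ≤ |f.1 x - g.1 x| + |g.1 x - h.1 x| := abs_sub_le _ _ _
    _ ≤ hullDist f g + hullDist g h := add_le_add (le_hullDist f g x) (le_hullDist g h x)
  · exact add_nonneg (hullDist_nonneg f g) (hullDist_nonneg g h)

lemma hullDist_eq_zero {f g : injectiveHull X} (hfg : hullDist f g = 0) : f = g := by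
  apply Subtype.ext
  funext x
  have h1 := le_hullDist f g x
  rw [hfg] at h1
  have h2 := abs_nonneg (f.1 x - g.1 x)
  have h3 : |f.1 x - g.1 x| = 0 := le_antisymm h1 h2
  have h4 := abs_eq_zero.mp h3
  linarith

end InjHull

/-- The metric on the injective hull: `d_∞(f,g) = sup_x |f x - g x|`. -/
noncomputable instance {X : Type u} [MetricSpace X] : MetricSpace (injectiveHull X) where
  dist := InjHull.hullDist
  dist_self := InjHull.hullDist_self
  dist_comm := InjHull.hullDist_comm
  dist_triangle := InjHull.hullDist_triangle
  eq_of_dist_eq_zero := InjHull.hullDist_eq_zero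

/-- The canonical isometric embedding `e : X → E(X)`, `x ↦ d(x, ·)`. -/
noncomputable def toHull {X : Type u} [MetricSpace X] (x : X) : injectiveHull X := by
  refine ⟨fun y => dist x y, ?_, ?_⟩
  · intro y z
    calc dist y z ≤ dist y x + dist x z := dist_triangle y x z
    _ = dist x y + dist x z := by rw [dist_comm y x]
  · intro g hg hle
    have h0 : g x ≤ 0 := by simpa using hle x
    have h1 : 0 ≤ g x := InjHull.form_nonneg hg x
    have hgx : g x = 0 := le_antisymm h0 h1
    funext z
    have h2 := hg z x
    have h3 : dist x z ≤ g z := by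
      rw [dist_comm]
      linarith
    exact le_antisymm (hle z) h3


section Aux

variable {X : Type u} [MetricSpace X]

lemma dist_toHull_eq (f : injectiveHull X) (x : X) :
    dist f (toHull x) = f.1 x := by
  have hth : (toHull x).1 = fun y => dist x y := rfl
  have h1 : ∀ z : X, |f.1 z - (toHull x).1 z| ≤ f.1 x := by
    intro z
    rw [hth]
    rw [abs_le]
    constructor
    · have := f.2.1 x z
      simp only [neg_le_sub_iff_le_add]
      linarith [this, dist_comm x z]
    · have := InjHull.le_dist_add f.2 z x
      rw [dist_comm z x] at this
      linarith
  have h2 : |f.1 x - (toHull x).1 x| = f.1 x := by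
    rw [hth]
    simp [abs_of_nonneg (InjHull.form_nonneg f.2.1 x)]
  apply le_antisymm
  · apply Real.sSup_le
    · rintro r ⟨z, rfl⟩
      exact h1 z
    · exact InjHull.form_nonneg f.2.1 x
  · rw [← h2]
    exact InjHull.le_hullDist f (toHull x) x

lemma dist_toHull_toHull (a b : X) :
    dist (toHull a : injectiveHull X) (toHull b) = dist a b := by
  rw [dist_toHull_eq (toHull a) b]
  rfl

/-- Key projection lemma: if `A` is `C`-strongly contracting in a geodesic space, then
for every point `y`, coarse projection point `p` of `y`, and `a' ∈ A`, we have
`d(y,p) + d(p,a') ≤ d(y,a') + 2C + 6`. -/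
lemma proj_lemma (hX : IsGeodesicSpace X) {C : ℝ} (hC : 0 ≤ C) {A : Set X}
    (hA : IsStronglyContracting C A) :
    ∀ y a' p : X, a' ∈ A → p ∈ A → dist y p ≤ Metric.infDist y A + 1 →
      dist y p + dist p a' ≤ dist y a' + (2 * C + 6) := by
  suffices H : ∀ n : ℕ, ∀ y a' p : X, a' ∈ A → p ∈ A →
      dist y p ≤ Metric.infDist y A + 1 → dist y a' ≤ n →
      dist y p + dist p a' ≤ dist y a' + (2 * C + 6) by
    intro y a' p ha' hp hproj
    exact H ⌈dist y a'⌉₊ y a' p ha' hp hproj (Nat.le_ceil _)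
  intro n
  induction n with
  | zero =>
    intro y a' p ha' hp hproj hn
    have h0 : Metric.infDist y A ≤ 0 := by
      have h := Metric.infDist_le_dist_of_mem (x := y) ha'
      simpa using le_trans h hn
    have h1 : dist y p ≤ 1 := by linarith
    have h2 : dist p a' ≤ dist p y + dist y a' := dist_triangle p y a'
    have := dist_comm y p
    linarith
  | succ n ih =>
    intro y a' p ha' hp hproj hn
    set r := Metric.infDist y A with hr
    by_cases hsmall : r ≤ 2
    · have h1 : dist y p ≤ 3 := by linarith
      have h2 : dist p a' ≤ dist p y + dist y a' := dist_triangle p y a'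
      have := dist_comm y p
      linarith
    · push_neg at hsmall
      have hra' : r ≤ dist y a' := Metric.infDist_le_dist_of_mem ha'
      obtain ⟨σ, hσ0, hσe, hσd⟩ := hX y a'
      set z := σ (r - 1) with hz
      have hmem1 : (r - 1) ∈ Set.Icc (0 : ℝ) (dist y a') := ⟨by linarith, by linarith⟩
      have hmem0 : (0 : ℝ) ∈ Set.Icc (0 : ℝ) (dist y a') := ⟨le_rfl, dist_nonneg⟩
      have hmemE : dist y a' ∈ Set.Icc (0 : ℝ) (dist y a') := ⟨dist_nonneg, le_rfl⟩
      have hyz : dist y z = r - 1 := by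
        have := hσd 0 hmem0 (r - 1) hmem1
        rw [hσ0] at this
        rw [this, zero_sub, abs_neg, abs_of_nonneg (by linarith : (0:ℝ) ≤ r - 1)]
      have hza' : dist z a' = dist y a' - (r - 1) := by
        have := hσd (r - 1) hmem1 (dist y a') hmemE
        rw [hσe] at this
        rw [this, abs_of_nonpos (by linarith : r - 1 - dist y a' ≤ 0)]
        ring
      have hdisj : Disjoint (Metric.closedBall y (r - 1)) A := by
        rw [Set.disjoint_left]
        intro w hw hwA
        have h1 : r ≤ dist y w := Metric.infDist_le_dist_of_mem hwA
        have h2 : dist w y ≤ r - 1 := Metric.mem_closedBall.1 hw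
        have := dist_comm y w
        linarith
      have hAne : A.Nonempty := ⟨a', ha'⟩
      obtain ⟨q', hq'A, hq'lt⟩ := (Metric.infDist_lt_iff hAne).1
        (lt_add_one (Metric.infDist z A))
      have hymem : y ∈ Metric.closedBall y (r - 1) := by
        simp [Metric.mem_closedBall]
        linarith
      have hzmem : z ∈ Metric.closedBall y (r - 1) := by
        simp [Metric.mem_closedBall, dist_comm z y, hyz]
      have hcontr : dist p q' ≤ C :=
        hA y (r - 1) hdisj y hymem z hzmem p ⟨hp, hproj⟩ q' ⟨hq'A, hq'lt.le⟩
      by_cases hz2 : Metric.infDist z A ≤ C + 2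
      · have h1 : dist z q' ≤ C + 3 := by linarith
        have h2 : dist p a' ≤ dist p q' + dist q' z + dist z a' := dist_triangle4 p q' z a'
        have := dist_comm z q'
        linarith
      · push_neg at hz2
        have hza'n : dist z a' ≤ n := by
          push_cast at hn ⊢
          linarith
        have hih := ih z a' q' ha' hq'A hq'lt.le hza'n
        have hzq : C + 2 ≤ dist z q' := le_trans hz2.le (Metric.infDist_le_dist_of_mem hq'A)
        have h2 : dist p a' ≤ dist p q' + dist q' a' := dist_triangle p q' a'
        linarith

end Aux

/-- For all `C ≥ 0` there is `D ≥ 0` so that, for every geodesic metric space `X` and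
every `C`-strongly contracting subset `A ⊆ X` satisfying Gromov's 4-point condition
with constant `C`, every geodesic of `E(X)` joining two points of `e(A)` stays in the
`D`-neighborhood of `e(A)`. -/
theorem hull_geodesics_near_contracting_set (C : ℝ) (hC : 0 ≤ C) :
    ∃ D : ℝ, 0 ≤ D ∧
      ∀ (X : Type u) [MetricSpace X], IsGeodesicSpace X →
        ∀ A : Set X, IsStronglyContracting C A → Gromov4 C A →
          ∀ a b : X, a ∈ A → b ∈ A →
            ∀ γ : ℝ → injectiveHull X,
              IsGeodesicSegment γ (toHull a) (toHull b) →
              ∀ t ∈ Set.Icc 0 (dist (toHull a) (toHull b)),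
                Metric.infDist (γ t) (toHull '' A) ≤ D := by
  refine ⟨9 * C + 25, by linarith, ?_⟩
  intro X _ hgeo A hA hG a b haA hbA γ hγ t ht
  obtain ⟨hγ0, hγL, hγd⟩ := hγ
  set L : ℝ := dist (toHull a : injectiveHull X) (toHull b) with hLdef
  have hLab : L = dist a b := dist_toHull_toHull a b
  set f : X → ℝ := (γ t).1 with hfdef
  have hfmem : f ∈ injectiveHull X := (γ t).2
  have ht0 : (0 : ℝ) ∈ Set.Icc (0 : ℝ) L := ⟨le_rfl, dist_nonneg⟩
  have htL : L ∈ Set.Icc (0 : ℝ) L := ⟨dist_nonneg, le_rfl⟩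
  have hfa : f a = t := by
    have h1 : dist (γ t) (γ 0) = |t - 0| := hγd t ht 0 ht0
    rw [hγ0, dist_toHull_eq] at h1
    rw [← hfdef] at h1
    rw [h1, sub_zero, abs_of_nonneg ht.1]
  have hfb : f b = L - t := by
    have h1 : dist (γ t) (γ L) = |t - L| := hγd t ht L htL
    rw [hγL, dist_toHull_eq] at h1
    rw [← hfdef] at h1
    rw [h1, abs_of_nonpos (by linarith [ht.2] : t - L ≤ 0)]
    ring
  -- point m on a geodesic from a to b at distance t from a
  obtain ⟨σ, hσ0, hσe, hσd⟩ := hgeo a b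
  set m : X := σ t with hm
  have htab : t ∈ Set.Icc (0 : ℝ) (dist a b) := by rw [← hLab]; exact ht
  have h0ab : (0 : ℝ) ∈ Set.Icc (0 : ℝ) (dist a b) := ⟨le_rfl, dist_nonneg⟩
  have hEab : dist a b ∈ Set.Icc (0 : ℝ) (dist a b) := ⟨dist_nonneg, le_rfl⟩
  have ham : dist a m = t := by
    have h1 := hσd 0 h0ab t htab
    rw [hσ0] at h1
    rw [h1, zero_sub, abs_neg, abs_of_nonneg ht.1]
  have hmb : dist m b = dist a b - t := by
    have h1 := hσd t htab (dist a b) hEab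
    rw [hσe] at h1
    rw [h1, abs_of_nonpos (by linarith [htab.2] : t - dist a b ≤ 0)]
    ring
  have hAne : A.Nonempty := ⟨a, haA⟩
  set K : ℝ := 2 * C + 6 with hK
  -- projection q of m onto A, close to m
  obtain ⟨q, hqA, hqlt⟩ := (Metric.infDist_lt_iff hAne).1 (lt_add_one (Metric.infDist m A))
  have hqa := proj_lemma hgeo hC hA m a q haA hqA hqlt.le
  have hqb := proj_lemma hgeo hC hA m b q hbA hqA hqlt.le
  have hmq : dist m q ≤ K := by
    have h1 : dist a b ≤ dist a q + dist q b := dist_triangle a q b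
    have e1 := dist_comm a m
    have e2 := dist_comm a q
    have e3 := dist_comm b q
    linarith
  -- witness y for near-minimality of f at m
  obtain ⟨y, hy⟩ := InjHull.exists_near hfmem m one_pos
  -- projection p of y onto A
  obtain ⟨p, hpA, hplt⟩ := (Metric.infDist_lt_iff hAne).1 (lt_add_one (Metric.infDist y A))
  have hi := proj_lemma hgeo hC hA y a p haA hpA hplt.le
  have hii := proj_lemma hgeo hC hA y b p hbA hpA hplt.le
  have hfya : dist y a ≤ f y + f a := hfmem.1 y a
  have hfyb : dist y b ≤ f y + f b := hfmem.1 y b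
  have hiv : dist y m ≤ dist y p + dist p q + dist q m := dist_triangle4 y p q m
  have hG4 := hG a haA b hbA p hpA q hqA
  have haq : dist a q ≤ dist a m + dist m q := dist_triangle a m q
  have hbq : dist b q ≤ dist b m + dist m q := dist_triangle b m q
  have hR : f m ≤ 3 * K + C + 1 := by
    have e1 := dist_comm y m
    have e2 := dist_comm q m
    have e3 := dist_comm b m
    rcases le_or_gt (dist a q + dist p b) (dist a p + dist b q) with hmax | hmax
    · rw [max_eq_right hmax] at hG4
      have e4 := dist_comm p a
      linarith
    · rw [max_eq_left hmax.le] at hG4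
      linarith
  -- conclude
  have hfq : f q ≤ dist q m + f m := InjHull.le_dist_add hfmem q m
  have hmem : toHull q ∈ toHull '' A := ⟨q, hqA, rfl⟩
  calc Metric.infDist (γ t) (toHull '' A) ≤ dist (γ t) (toHull q) :=
        Metric.infDist_le_dist_of_mem hmem
    _ = f q := dist_toHull_eq (γ t) q
    _ ≤ dist q m + f m := hfq
    _ ≤ K + (3 * K + C + 1) := by
        have := dist_comm q m
        linarith
    _ ≤ 9 * C + 25 := by rw [hK]; linarith
end

section
/- For all C ≥ 0 there exists D ≥ 0 with the following property. Let X be a geodesic metric space and let A ⊆ X be a C-strongly contracting subset satisfying Gromov's 4-point condition with constant C. Then for any x ∈ E(X), any a ∈ π_{e(A)}(x), and any b ∈ e(A), one has d_∞(x,b) ≥ d_∞(x,a) + d_∞(a,b) − D. -/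
universe u

namespace RTAux

variable {X : Type u} [MetricSpace X]

lemma exists_cproj (A : Set X) (hA : A.Nonempty) (z : X) :
    ∃ q ∈ A, dist z q ≤ Metric.infDist z A + 1 := by
  have h : Metric.infDist z A < Metric.infDist z A + 1 := by linarith
  obtain ⟨q, hqA, hq⟩ := (Metric.infDist_lt_iff hA).mp h
  exact ⟨q, hqA, hq.le⟩

lemma rt_chain (C : ℝ) (hC : 0 ≤ C) (A : Set X) (hX : IsGeodesicSpace X)
    (hSC : IsStronglyContracting C A) (b : X) (hb : b ∈ A) :
    ∀ n : ℕ, ∀ z q, q ∈ A → dist z q ≤ Metric.infDist z A + 1 → dist z b ≤ (n : ℝ) →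
      Metric.infDist z A + dist q b ≤ dist z b + (2*C+5) := by
  have hAne : A.Nonempty := ⟨b, hb⟩
  have case1 : ∀ z q, q ∈ A → dist z q ≤ Metric.infDist z A + 1 →
      Metric.infDist z A ≤ C + 2 →
      Metric.infDist z A + dist q b ≤ dist z b + (2*C+5) := by
    intro z q _ hq hsmall
    have h1 : dist q b ≤ dist q z + dist z b := dist_triangle q z b
    have h2 : dist q z = dist z q := dist_comm q z
    linarith
  intro n
  induction n with
  | zero =>
    intro z q hqA hq hzb
    have h0 : Metric.infDist z A ≤ dist z b := Metric.infDist_le_dist_of_mem hb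
    push_cast at hzb
    exact case1 z q hqA hq (by linarith)
  | succ n ih =>
    intro z q hqA hq hzb
    push_cast at hzb
    by_cases hsmall : Metric.infDist z A ≤ C + 2
    · exact case1 z q hqA hq hsmall
    · push_neg at hsmall
      have hDzb : Metric.infDist z A ≤ dist z b := Metric.infDist_le_dist_of_mem hb
      obtain ⟨γ, hγ0, hγd, hγiso⟩ := hX z b
      set t : ℝ := Metric.infDist z A - 1 with htdef
      have ht0 : 0 ≤ t := by rw [htdef]; linarith
      have htd : t ≤ dist z b := by rw [htdef]; linarith
      have hmem0 : (0:ℝ) ∈ Set.Icc (0:ℝ) (dist z b) := ⟨le_refl _, dist_nonneg⟩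
      have hmemt : t ∈ Set.Icc (0:ℝ) (dist z b) := ⟨ht0, htd⟩
      have hmemd : dist z b ∈ Set.Icc (0:ℝ) (dist z b) := ⟨dist_nonneg, le_refl _⟩
      have hzz' : dist z (γ t) = t := by
        have h := hγiso 0 hmem0 t hmemt
        rw [hγ0] at h
        rw [h, zero_sub, abs_neg, abs_of_nonneg ht0]
      have hz'b : dist (γ t) b = dist z b - t := by
        have h := hγiso t hmemt (dist z b) hmemd
        rw [hγd] at h
        rw [h, abs_of_nonpos (by linarith), neg_sub]
      obtain ⟨q', hq'A, hq'⟩ := exists_cproj A hAne (γ t)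
      have hdisj : Disjoint (Metric.closedBall z t) A := by
        rw [Set.disjoint_left]
        intro w hw hwA
        have h1 : dist w z ≤ t := Metric.mem_closedBall.mp hw
        have h2 : Metric.infDist z A ≤ dist z w := Metric.infDist_le_dist_of_mem hwA
        rw [dist_comm] at h2
        linarith
      have hqq' : dist q q' ≤ C := by
        refine hSC z t hdisj z ?_ (γ t) ?_ q ⟨hqA, hq⟩ q' ⟨hq'A, hq'⟩
        · rw [Metric.mem_closedBall, dist_self]; exact ht0
        · rw [Metric.mem_closedBall, dist_comm, hzz']
      have hz'bn : dist (γ t) b ≤ (n : ℝ) := by rw [hz'b, htdef]; linarith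
      have htri2 : dist q b ≤ dist q q' + dist q' b := dist_triangle _ _ _
      by_cases h2 : Metric.infDist (γ t) A ≤ C + 2
      · have htri : dist q' b ≤ dist q' (γ t) + dist (γ t) b := dist_triangle _ _ _
        have hcq' : dist q' (γ t) = dist (γ t) q' := dist_comm _ _
        linarith [hz'b]
      · push_neg at h2
        have hih := ih (γ t) q' hq'A hq' hz'bn
        linarith [hz'b]

lemma rt (C : ℝ) (hC : 0 ≤ C) (A : Set X) (hX : IsGeodesicSpace X)
    (hSC : IsStronglyContracting C A) (b : X) (hb : b ∈ A) (z q : X)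
    (hqA : q ∈ A) (hq : dist z q ≤ Metric.infDist z A + 1) :
    Metric.infDist z A + dist q b ≤ dist z b + (2*C+5) := by
  obtain ⟨n, hn⟩ := exists_nat_ge (dist z b)
  exact rt_chain C hC A hX hSC b hb n z q hqA hq hn

lemma dist_toHull (x : injectiveHull X) (ξ : X) : dist x (toHull ξ) = x.1 ξ := by
  have hdd : dist x (toHull ξ) = InjHull.hullDist x (toHull ξ) := rfl
  rw [hdd]
  unfold InjHull.hullDist
  apply le_antisymm
  · apply Real.sSup_le
    · rintro r ⟨z, rfl⟩
      show |x.1 z - (toHull ξ).1 z| ≤ x.1 ξ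
      have h1 : x.1 z ≤ dist z ξ + x.1 ξ := InjHull.le_dist_add x.2 z ξ
      have h2 : dist ξ z ≤ x.1 ξ + x.1 z := x.2.1 ξ z
      have h3 : (toHull ξ).1 z = dist ξ z := rfl
      have h4 : dist z ξ = dist ξ z := dist_comm z ξ
      rw [h3, abs_le]
      constructor
      · linarith
      · linarith
    · exact InjHull.form_nonneg x.2.1 ξ
  · apply le_csSup (InjHull.hullDist_bddAbove _ _)
    refine ⟨ξ, ?_⟩
    show |x.1 ξ - (toHull ξ).1 ξ| = x.1 ξ
    have h3 : (toHull ξ).1 ξ = dist ξ ξ := rfl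
    rw [h3, dist_self, sub_zero, abs_of_nonneg (InjHull.form_nonneg x.2.1 ξ)]

lemma dist_toHull_toHull (p r : X) : dist (toHull p) (toHull r) = dist p r := by
  rw [dist_toHull]
  rfl

end RTAux

/-- For all `C ≥ 0` there is `D ≥ 0` so that, for every geodesic metric space `X` and
every `C`-strongly contracting subset `A ⊆ X` satisfying Gromov's 4-point condition
with constant `C`, for every `x ∈ E(X)`, `a ∈ π_{e(A)}(x)` and `b ∈ e(A)` one has
`d_∞(x,b) ≥ d_∞(x,a) + d_∞(a,b) - D`. -/


theorem hull_reverse_triangle_inequality (C : ℝ) (hC : 0 ≤ C) :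
    ∃ D : ℝ, 0 ≤ D ∧
      ∀ (X : Type u) [MetricSpace X], IsGeodesicSpace X →
        ∀ A : Set X, IsStronglyContracting C A → Gromov4 C A →
          ∀ x : injectiveHull X, ∀ a ∈ coarseProj (toHull '' A) x, ∀ b ∈ toHull '' A,
            dist x a + dist a b - D ≤ dist x b := by
  refine ⟨10*C + 30, by linarith, ?_⟩
  intro X _ hX A hSC hG4 x a ha b0 hb0
  obtain ⟨haA, hax⟩ := ha
  obtain ⟨α, hαA, rfl⟩ := haA
  obtain ⟨β, hβA, rfl⟩ := hb0
  rw [RTAux.dist_toHull_toHull, RTAux.dist_toHull, RTAux.dist_toHull]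
  rw [RTAux.dist_toHull] at hax
  have hAne : A.Nonempty := ⟨α, hαA⟩
  have hnm : ∀ ξ ∈ A, x.1 α ≤ x.1 ξ + 1 := by
    intro ξ hξ
    have h1 : Metric.infDist x (toHull '' A) ≤ dist x (toHull ξ) :=
      Metric.infDist_le_dist_of_mem (Set.mem_image_of_mem _ hξ)
    rw [RTAux.dist_toHull] at h1
    linarith
  have hf := x.2.1
  -- locate the quasiconvex point p near position t0 on a geodesic from α to β
  have hl1 : x.1 α ≤ dist α β + x.1 β := InjHull.le_dist_add x.2 α β
  have hl2 : x.1 β ≤ dist β α + x.1 α := InjHull.le_dist_add x.2 β α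
  have hc0 : dist β α = dist α β := dist_comm β α
  set t0 : ℝ := (x.1 α + dist α β - x.1 β)/2 with ht0def
  have ht00 : 0 ≤ t0 := by rw [ht0def]; linarith
  have ht0n : t0 ≤ dist α β := by rw [ht0def]; linarith
  obtain ⟨γ, hγ0, hγd, hγiso⟩ := hX α β
  have hμα : dist α (γ t0) = t0 := by
    have h := hγiso 0 ⟨le_refl _, dist_nonneg⟩ t0 ⟨ht00, ht0n⟩
    rw [hγ0] at h
    rw [h, zero_sub, abs_neg, abs_of_nonneg ht00]
  have hμβ : dist (γ t0) β = dist α β - t0 := by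
    have h := hγiso t0 ⟨ht00, ht0n⟩ (dist α β) ⟨dist_nonneg, le_refl _⟩
    rw [hγd] at h
    rw [h, abs_of_nonpos (by linarith), neg_sub]
  obtain ⟨p, hpA, hpμ⟩ := RTAux.exists_cproj A hAne (γ t0)
  have hrta : Metric.infDist (γ t0) A + dist p α ≤ dist (γ t0) α + (2*C+5) :=
    RTAux.rt C hC A hX hSC α hαA (γ t0) p hpA hpμ
  have hrtb : Metric.infDist (γ t0) A + dist p β ≤ dist (γ t0) β + (2*C+5) :=
    RTAux.rt C hC A hX hSC β hβA (γ t0) p hpA hpμ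
  have hcαμ : dist (γ t0) α = dist α (γ t0) := dist_comm _ _
  have htri0 : dist α β ≤ dist α p + dist p β := dist_triangle α p β
  have hcαp : dist α p = dist p α := dist_comm α p
  have hiμ0 : 0 ≤ Metric.infDist (γ t0) A := Metric.infDist_nonneg
  have hμp : dist (γ t0) p ≤ 2*C + 6 := by linarith
  have hcpμ : dist p (γ t0) = dist (γ t0) p := dist_comm _ _
  have hcβμ : dist β (γ t0) = dist (γ t0) β := dist_comm _ _
  have hαp_ub : dist α p ≤ t0 + (2*C+6) := by
    have h := dist_triangle α (γ t0) p
    linarith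
  have hαp_lb : t0 - (2*C+6) ≤ dist α p := by
    have h := dist_triangle α p (γ t0)
    linarith
  have hβp_ub : dist β p ≤ (dist α β - t0) + (2*C+6) := by
    have h := dist_triangle β (γ t0) p
    linarith
  have hβp_lb : (dist α β - t0) - (2*C+6) ≤ dist β p := by
    have h := dist_triangle β p (γ t0)
    have hcβp : dist p β = dist β p := dist_comm p β
    linarith
  -- witness at p, and its coarse projection q
  obtain ⟨y, hy⟩ := InjHull.exists_near x.2 p one_pos
  obtain ⟨q, hqA, hqy⟩ := RTAux.exists_cproj A hAne y
  have hrt1 : Metric.infDist y A + dist q α ≤ dist y α + (2*C+5) :=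
    RTAux.rt C hC A hX hSC α hαA y q hqA hqy
  have hrt2 : Metric.infDist y A + dist q β ≤ dist y β + (2*C+5) :=
    RTAux.rt C hC A hX hSC β hβA y q hqA hqy
  have hrt3 : Metric.infDist y A + dist q p ≤ dist y p + (2*C+5) :=
    RTAux.rt C hC A hX hSC p hpA y q hqA hqy
  have hiy0 : 0 ≤ Metric.infDist y A := Metric.infDist_nonneg
  have hiyα : Metric.infDist y A ≤ dist y α := Metric.infDist_le_dist_of_mem hαA
  have hiyβ : Metric.infDist y A ≤ dist y β := Metric.infDist_le_dist_of_mem hβA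
  have hiyp : Metric.infDist y A ≤ dist y p := Metric.infDist_le_dist_of_mem hpA
  have hiyq : Metric.infDist y A ≤ dist y q := Metric.infDist_le_dist_of_mem hqA
  -- near-minimality facts
  have hn1 := hnm β hβA
  have hn2 := hnm p hpA
  have hn3 := hnm q hqA
  -- forms
  have hfαβ := hf α β
  have hfαp := hf α p
  have hfαq := hf α q
  have hfαy := hf α y
  have hfβp := hf β p
  have hfβq := hf β q
  have hfβy := hf β y
  have hfpq := hf p q
  have hfpy := hf p y
  have hfqy := hf q y
  -- 1-Lipschitz facts
  have hlαp : x.1 α ≤ dist α p + x.1 p := InjHull.le_dist_add x.2 α p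
  have hlpα : x.1 p ≤ dist p α + x.1 α := InjHull.le_dist_add x.2 p α
  have hlαq : x.1 α ≤ dist α q + x.1 q := InjHull.le_dist_add x.2 α q
  have hlqα : x.1 q ≤ dist q α + x.1 α := InjHull.le_dist_add x.2 q α
  have hlαy : x.1 α ≤ dist α y + x.1 y := InjHull.le_dist_add x.2 α y
  have hlyα : x.1 y ≤ dist y α + x.1 α := InjHull.le_dist_add x.2 y α
  have hlβp : x.1 β ≤ dist β p + x.1 p := InjHull.le_dist_add x.2 β p
  have hlpβ : x.1 p ≤ dist p β + x.1 β := InjHull.le_dist_add x.2 p β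
  have hlβq : x.1 β ≤ dist β q + x.1 q := InjHull.le_dist_add x.2 β q
  have hlqβ : x.1 q ≤ dist q β + x.1 β := InjHull.le_dist_add x.2 q β
  have hlβy : x.1 β ≤ dist β y + x.1 y := InjHull.le_dist_add x.2 β y
  have hlyβ : x.1 y ≤ dist y β + x.1 β := InjHull.le_dist_add x.2 y β
  have hlpq : x.1 p ≤ dist p q + x.1 q := InjHull.le_dist_add x.2 p q
  have hlqp : x.1 q ≤ dist q p + x.1 p := InjHull.le_dist_add x.2 q p
  have hlpy : x.1 p ≤ dist p y + x.1 y := InjHull.le_dist_add x.2 p y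
  have hlyp : x.1 y ≤ dist y p + x.1 p := InjHull.le_dist_add x.2 y p
  have hlqy : x.1 q ≤ dist q y + x.1 y := InjHull.le_dist_add x.2 q y
  have hlyq : x.1 y ≤ dist y q + x.1 q := InjHull.le_dist_add x.2 y q
  -- commutations
  have hcpα : dist p α = dist α p := dist_comm p α
  have hcqα : dist q α = dist α q := dist_comm q α
  have hcyα : dist y α = dist α y := dist_comm y α
  have hcpβ : dist p β = dist β p := dist_comm p β
  have hcqβ : dist q β = dist β q := dist_comm q β
  have hcyβ : dist y β = dist β y := dist_comm y β
  have hcqp : dist q p = dist p q := dist_comm q p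
  have hcyp : dist y p = dist p y := dist_comm y p
  have hcyq : dist y q = dist q y := dist_comm y q
  -- triangle inequalities among α β p q y
  have ht1 := dist_triangle α β p
  have ht2 := dist_triangle α p β
  have ht3 := dist_triangle α β q
  have ht4 := dist_triangle α q β
  have ht5 := dist_triangle α β y
  have ht6 := dist_triangle α y β
  have ht7 := dist_triangle α p q
  have ht8 := dist_triangle α q p
  have ht9 := dist_triangle α p y
  have ht10 := dist_triangle α y p
  have ht11 := dist_triangle α q y
  have ht12 := dist_triangle α y q
  have ht13 := dist_triangle β p q
  have ht14 := dist_triangle β q p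
  have ht15 := dist_triangle β p y
  have ht16 := dist_triangle β y p
  have ht17 := dist_triangle β q y
  have ht18 := dist_triangle β y q
  have ht19 := dist_triangle p q y
  have ht20 := dist_triangle p y q
  have ht21 := dist_triangle q p y
  have ht22 := dist_triangle q y p
  have ht23 := dist_triangle y p q
  have ht24 := dist_triangle y q p
  have ht25 := dist_triangle β α p
  have ht26 := dist_triangle β α q
  have ht27 := dist_triangle β α y
  have ht28 := dist_triangle p α q
  have ht29 := dist_triangle p α y
  have ht30 := dist_triangle q α y
  -- nonnegativity
  have hd1 : (0:ℝ) ≤ dist α β := dist_nonneg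
  have hd2 : (0:ℝ) ≤ dist α p := dist_nonneg
  have hd3 : (0:ℝ) ≤ dist α q := dist_nonneg
  have hd4 : (0:ℝ) ≤ dist α y := dist_nonneg
  have hd5 : (0:ℝ) ≤ dist β p := dist_nonneg
  have hd6 : (0:ℝ) ≤ dist β q := dist_nonneg
  have hd7 : (0:ℝ) ≤ dist β y := dist_nonneg
  have hd8 : (0:ℝ) ≤ dist p q := dist_nonneg
  have hd9 : (0:ℝ) ≤ dist p y := dist_nonneg
  have hd10 : (0:ℝ) ≤ dist q y := dist_nonneg
  have hm1 := InjHull.form_nonneg x.2.1 α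
  have hm2 := InjHull.form_nonneg x.2.1 β
  have hm3 := InjHull.form_nonneg x.2.1 p
  have hm4 := InjHull.form_nonneg x.2.1 q
  have hm5 := InjHull.form_nonneg x.2.1 y
  -- Gromov 4-point conditions on the quadruple (α, β, p, q)
  have G1 := hG4 α hαA β hβA p hpA q hqA
  have G2 := hG4 α hαA p hpA β hβA q hqA
  have G3 := hG4 α hαA q hqA β hβA p hpA
  have G1' : dist α β + dist p q - C ≤
      max (dist α q + dist p β) (dist α p + dist β q) := by linarith
  have G2' : dist α p + dist β q - C ≤
      max (dist α q + dist β p) (dist α β + dist p q) := by linarith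
  have G3' : dist α q + dist β p - C ≤
      max (dist α p + dist β q) (dist α β + dist q p) := by linarith
  rcases le_max_iff.mp G1' with g1 | g1 <;>
    rcases le_max_iff.mp G2' with g2 | g2 <;>
      rcases le_max_iff.mp G3' with g3 | g3 <;>
        linarith
end
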